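/- arXiv:2408.12862 — 4 statements merged into one kernel-verified Lean document; each statement's English description precedes it below -/
import Mathlib

section
/- For every integer n ≥ 2 there exists a population protocol P = (Q, ρ, {yes,no}, π, δ) with |Q| ≤ 16(n+1) that solves the complete graph identification problem under weak fairness on the class of all communication graphs with exactly n vertices. -/
/-! Population protocols on communication graphs: general framework. -/

namespace CGI

attribute [local instance] Classical.propDecidable

noncomputable section

variable {V Q : Type*}

/-- One interaction step: the initiator `e.1` and the responder `e.2` update their
states according to the transition function `δ`; everyone else is unchanged. -/
def stepFn (δ : Q × Q → Q × Q) (C : V → Q) (e : V × V) : V → Q :=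
  fun w =>
    if w = e.1 then (δ (C e.1, C e.2)).1
    else if w = e.2 then (δ (C e.1, C e.2)).2
    else C w

/-- Reachability between configurations by finitely many steps over arcs of `E`. -/
def Reach (δ : Q × Q → Q × Q) (E : V × V → Prop) (C C' : V → Q) : Prop :=
  Relation.ReflTransGen (fun D D' => ∃ e, E e ∧ D' = stepFn δ D e) C C'

/-- A communication graph: no self-loops and weak connectivity. -/
def IsCommGraph (E : V × V → Prop) : Prop :=
  (∀ v : V, ¬ E (v, v)) ∧
  ∀ u w : V, Relation.ReflTransGen (fun a b => E (a, b) ∨ E (b, a)) u w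

/-- A configuration is stable if no reachable configuration changes any agent's output. -/
def IsStable (out : Q → Bool) (δ : Q × Q → Q × Q) (E : V × V → Prop) (C : V → Q) : Prop :=
  ∀ C', Reach δ E C C' → ∀ a, out (C' a) = out (C a)

/-- The configuration after `t` steps of the execution driven by the schedule `γ`,
starting from the all-`ρ` initial configuration. -/
def conf (δ : Q × Q → Q × Q) (ρ : Q) (γ : ℕ → V × V) : ℕ → V → Q
  | 0 => fun _ => ρ
  | t + 1 => stepFn δ (conf δ ρ γ t) (γ t)

/-- The schedule uses only arcs of `E`. -/
def ValidSched (E : V × V → Prop) (γ : ℕ → V × V) : Prop := ∀ t, E (γ t)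

/-- A weakly fair schedule: every arc of `E` occurs infinitely often. -/
def WeaklyFair (E : V × V → Prop) (γ : ℕ → V × V) : Prop :=
  ValidSched E γ ∧ ∀ e, E e → ∀ t, ∃ s, t ≤ s ∧ γ s = e

/-- A complete communication graph. -/
def IsComplete (E : V × V → Prop) : Prop := ∀ u w : V, u ≠ w → E (u, w)

/-- A protocol (initial state `ρ`, output map `out` with `true` = yes and `false` = no,
transition function `δ`) solves complete graph identification under weak fairness on the
communication graph `E`: every weakly fair execution contains a stable configuration in
which every agent outputs yes if the graph is complete, and no otherwise. -/
def SolvesWF (ρ : Q) (out : Q → Bool) (δ : Q × Q → Q × Q) (E : V × V → Prop) : Prop :=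
  ∀ γ : ℕ → V × V, WeaklyFair E γ →
    ∃ t : ℕ, IsStable out δ E (conf δ ρ γ t) ∧
      (IsComplete E → ∀ a, out (conf δ ρ γ t a) = true) ∧
      (¬ IsComplete E → ∀ a, out (conf δ ρ γ t a) = false)

/-! ### The protocol -/

/-- Value wrapper into `Fin (n+1)`. -/
def fv (n v : ℕ) : Fin (n+1) := ⟨min v n, by omega⟩

@[simp] lemma fv_val {n v : ℕ} (h : v ≤ n) : (fv n v).val = v := by
  simp [fv, Nat.min_eq_left h]

/-- State space: two tag bits, a value in `Fin (n+1)`, and two auxiliary bits.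
Tags: `(false,false)` = normal agent (value = its level);
`(false,true)` = A-token holder (aux bits `(true,false)` = awaiting spawn,
`(false,false)` = active, `(false,true)` = moving);
`(true,false)` = B-token holder (value = its level, aux bits = handshake progress);
`(true,true)` = "yes". -/
abbrev Qn (n : ℕ) : Type := Bool × Bool × Fin (n+1) × Bool × Bool

def stN (n v : ℕ) : Qn n := (false, false, fv n v, false, false)
def stAw (n v : ℕ) : Qn n := (false, true, fv n v, true, false)
def stA (n v : ℕ) : Qn n := (false, true, fv n v, false, false)
def stAm (n v : ℕ) : Qn n := (false, true, fv n v, false, true)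
def stB (n v : ℕ) (c1 c2 : Bool) : Qn n := (true, false, fv n v, c1, c2)
def stY (n : ℕ) : Qn n := (true, true, fv n 0, false, false)

/-- The transition function. -/
def del (n : ℕ) : Qn n → Qn n → Qn n × Qn n
  -- yes spreads
  | x@(true, true, _, _, _), y@(true, true, _, _, _) => (x, y)
  | x@(true, true, _, _, _), _ => (x, (true, true, ⟨0, by omega⟩, false, false))
  | x, (true, true, v2, a2, b2) => ((true, true, ⟨0, by omega⟩, false, false), (true, true, v2, a2, b2))
  -- two normal agents: level (promotion) dynamics
  | x@(false, false, v1, a1, b1), y@(false, false, v2, a2, b2) =>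
    if v1.val = v2.val then
      (if h : v1.val + 3 ≤ n then ((false, false, ⟨v1.val+1, by omega⟩, false, false), y)
       else if v1.val + 2 = n then ((false, true, ⟨n-1, by omega⟩, true, false), y)
       else (x, y))
    else (x, y)
  -- A-token holder meets a normal agent
  | x@(false, true, v1, true, false), y@(false, false, v2, _, _) =>
    if v2.val + 1 = v1.val then ((false, true, v1, false, false), (true, false, v2, false, false)) else (x, y)
  | x@(false, true, v1, false, true), y@(false, false, v2, _, _) =>
    if h : v2.val = v1.val ∧ v1.val + 1 ≤ n
    then ((false, false, ⟨v1.val+1, by omega⟩, false, false), (false, true, v1, true, false)) else (x, y)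
  | x@(false, false, v1, _, _), y@(false, true, v2, true, false) =>
    if v1.val + 1 = v2.val then ((true, false, v1, false, false), (false, true, v2, false, false)) else (x, y)
  | x@(false, false, v1, _, _), y@(false, true, v2, false, true) =>
    if h : v1.val = v2.val ∧ v2.val + 1 ≤ n
    then ((false, true, v2, true, false), (false, false, ⟨v2.val+1, by omega⟩, false, false)) else (x, y)
  -- active A-token holder meets the B-token holder
  | x@(false, true, v1, false, false), y@(true, false, v2, true, true) =>
    if v2.val = 0 then
      (if v1.val = 1 then ((true, true, ⟨0, by omega⟩, false, false), (true, true, ⟨0, by omega⟩, false, false))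
       else if 2 ≤ v1.val then ((false, true, ⟨v1.val-1, by omega⟩, false, true), (false, false, ⟨0, by omega⟩, false, false)) else (x, y))
    else (x, y)
  | x@(false, true, _, false, false), (true, false, v2, false, c2) =>
    (x, (true, false, v2, true, c2))
  | x@(true, false, v1, true, true), y@(false, true, v2, false, false) =>
    if v1.val = 0 then
      (if v2.val = 1 then ((true, true, ⟨0, by omega⟩, false, false), (true, true, ⟨0, by omega⟩, false, false))
       else if 2 ≤ v2.val then ((false, false, ⟨0, by omega⟩, false, false), (false, true, ⟨v2.val-1, by omega⟩, false, true)) else (x, y))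
    else (x, y)
  | (true, false, v1, c1, false), y@(false, true, _, false, false) =>
    ((true, false, v1, c1, true), y)
  -- B-token movement
  | x@(true, false, v1, true, true), y@(false, false, v2, _, _) =>
    if v2.val + 1 = v1.val then ((false, false, v1, false, false), (true, false, v2, false, false)) else (x, y)
  | x@(false, false, v1, _, _), y@(true, false, v2, true, true) =>
    if v1.val + 1 = v2.val then ((true, false, v1, false, false), (false, false, v2, false, false)) else (x, y)
  | x, y => (x, y)

/-- Output: yes iff tag `(true,true)`. -/
def outF (n : ℕ) (q : Qn n) : Bool := q.1 && q.2.1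

/-- The potential function: every non-noop transition strictly increases the sum. -/
def pot (n : ℕ) : Qn n → ℕ
  | (false, false, v, _, _) => v.val
  | (false, true, v, true, false) => (n - v.val) * (100*(n+2)) + 10*(n+2) + 1
  | (false, true, v, false, false) => (n - v.val) * (100*(n+2)) + 50*(n+2)
  | (false, true, v, false, true) => (n - v.val) * (100*(n+2)) + 10*(n+2)
  | (false, true, _, true, true) => 0
  | (true, false, v, c1, c2) => 3 * (n - v.val) + c1.toNat + c2.toNat + 1
  | (true, true, _, _, _) => n * (100*(n+2)) + 100*(n+2)

lemma pot_del (n : ℕ) (x y : Qn n) :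
    del n x y = (x, y) ∨
      pot n x + pot n y < pot n (del n x y).1 + pot n (del n x y).2 := by
  obtain ⟨t1, u1, v1, a1, b1⟩ := x
  obtain ⟨t2, u2, v2, a2, b2⟩ := y
  have h1 : v1.val ≤ n := by have := v1.isLt; omega
  have h2 : v2.val ≤ n := by have := v2.isLt; omega
  have e1 : (n - v1.val) * (100*(n+2)) + v1.val * (100*(n+2)) = n*(100*(n+2)) := by
    rw [← Nat.add_mul]; congr 1; omega
  have e2 : (n - v2.val) * (100*(n+2)) + v2.val * (100*(n+2)) = n*(100*(n+2)) := by
    rw [← Nat.add_mul]; congr 1; omega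
  cases t1 <;> cases u1 <;> cases a1 <;> cases b1 <;>
  cases t2 <;> cases u2 <;> cases a2 <;> cases b2 <;>
    (try dsimp only [del, pot]) <;>
    (try split_ifs) <;>
    (try dsimp only [pot, Bool.toNat, cond_true, cond_false]) <;>
    first
      | (left; rfl)
      | (right; omega)
      | (right;
         rw [show n - (v1.val - 1) = (n - v1.val) + 1 from by omega, Nat.add_mul]; omega)
      | (right;
         rw [show n - (v2.val - 1) = (n - v2.val) + 1 from by omega, Nat.add_mul]; omega)
      | (right; rw [show n - (n - 1) = 1 from by omega]; omega)


/-! ### Computation lemmas for `del` -/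

section Compute

variable {n : ℕ}

lemma fv_eq {v : ℕ} (h : v ≤ n) : fv n v = ⟨v, by omega⟩ := by
  apply Fin.ext; simp [fv, Nat.min_eq_left h]

lemma stN_inj {v w : ℕ} (hv : v ≤ n) (hw : w ≤ n) (h : stN n v = stN n w) : v = w := by
  have := congrArg (fun q : Qn n => q.2.2.1.val) h
  simpa [stN, fv_val hv, fv_val hw] using this

lemma del_NN_ne {v w : ℕ} (hv : v ≤ n) (hw : w ≤ n) (hne : v ≠ w) :
    del n (stN n v) (stN n w) = (stN n v, stN n w) := by
  dsimp only [del, stN]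
  rw [if_neg]
  simp [fv_val hv, fv_val hw, hne]

lemma del_NN_promote {v : ℕ} (h : v + 3 ≤ n) :
    del n (stN n v) (stN n v) = (stN n (v+1), stN n v) := by
  have hv : v ≤ n := by omega
  dsimp only [del, stN]
  rw [if_pos (by rfl), dif_pos (by rw [fv_val hv]; omega)]
  simp [stN, fv_val hv, fv_eq (show v + 1 ≤ n by omega)]

lemma del_NN_boot {v : ℕ} (h3 : ¬ (v + 3 ≤ n)) (h : v + 2 = n) :
    del n (stN n v) (stN n v) = (stAw n (n-1), stN n v) := by
  have hv : v ≤ n := by omega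
  dsimp only [del, stN]
  rw [if_pos (by rfl), dif_neg (by rw [fv_val hv]; omega), if_pos (by rw [fv_val hv]; omega)]
  simp [stAw, fv_eq (show n - 1 ≤ n by omega)]

lemma del_Aw_N_hit {v w : ℕ} (hv : v ≤ n) (hw : w ≤ n) (h : w + 1 = v) :
    del n (stAw n v) (stN n w) = (stA n v, stB n w false false) := by
  dsimp only [del, stAw, stN]
  rw [if_pos (by rw [fv_val hv, fv_val hw]; omega)]
  simp [stA, stB]

lemma del_Aw_N_miss {v w : ℕ} (hv : v ≤ n) (hw : w ≤ n) (h : w + 1 ≠ v) :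
    del n (stAw n v) (stN n w) = (stAw n v, stN n w) := by
  dsimp only [del, stAw, stN]
  rw [if_neg (by rw [fv_val hv, fv_val hw]; omega)]

lemma del_N_Aw_hit {v w : ℕ} (hv : v ≤ n) (hw : w ≤ n) (h : w + 1 = v) :
    del n (stN n w) (stAw n v) = (stB n w false false, stA n v) := by
  dsimp only [del, stAw, stN]
  rw [if_pos (by rw [fv_val hv, fv_val hw]; omega)]
  simp [stA, stB]

lemma del_N_Aw_miss {v w : ℕ} (hv : v ≤ n) (hw : w ≤ n) (h : w + 1 ≠ v) :
    del n (stN n w) (stAw n v) = (stN n w, stAw n v) := by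
  dsimp only [del, stAw, stN]
  rw [if_neg (by rw [fv_val hv, fv_val hw]; omega)]

lemma del_Am_N_hit {v w : ℕ} (hv : v + 1 ≤ n) (hw : w ≤ n) (h : w = v) :
    del n (stAm n v) (stN n w) = (stN n (v+1), stAw n v) := by
  dsimp only [del, stAm, stN]
  rw [dif_pos (by rw [fv_val (show v ≤ n by omega), fv_val hw]; omega)]
  simp [stAw, stN, fv_val (show v ≤ n by omega), fv_eq (show v + 1 ≤ n by omega)]

lemma del_Am_N_miss {v w : ℕ} (hv : v ≤ n) (hw : w ≤ n) (h : w ≠ v) :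
    del n (stAm n v) (stN n w) = (stAm n v, stN n w) := by
  dsimp only [del, stAm, stN]
  rw [dif_neg (by rw [fv_val hv, fv_val hw]; tauto)]

lemma del_N_Am_hit {v w : ℕ} (hv : v + 1 ≤ n) (hw : w ≤ n) (h : w = v) :
    del n (stN n w) (stAm n v) = (stAw n v, stN n (v+1)) := by
  dsimp only [del, stAm, stN]
  rw [dif_pos (by rw [fv_val (show v ≤ n by omega), fv_val hw]; omega)]
  simp [stAw, stN, fv_val (show v ≤ n by omega), fv_eq (show v + 1 ≤ n by omega)]

lemma del_N_Am_miss {v w : ℕ} (hv : v ≤ n) (hw : w ≤ n) (h : w ≠ v) :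
    del n (stN n w) (stAm n v) = (stN n w, stAm n v) := by
  dsimp only [del, stAm, stN]
  rw [dif_neg (by rw [fv_val hv, fv_val hw]; tauto)]

lemma del_A_N {v w : ℕ} : del n (stA n v) (stN n w) = (stA n v, stN n w) := rfl

lemma del_N_A {v w : ℕ} : del n (stN n w) (stA n v) = (stN n w, stA n v) := rfl

lemma del_A_B_set1 {a j : ℕ} (c2 : Bool) :
    del n (stA n a) (stB n j false c2) = (stA n a, stB n j true c2) := rfl

lemma del_A_B_idle {a j : ℕ} :
    del n (stA n a) (stB n j true false) = (stA n a, stB n j true false) := rfl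

lemma del_A_B_final {a j : ℕ} (ha : a = 1) (hj : j = 0) (hn : 2 ≤ n) :
    del n (stA n a) (stB n j true true) = (stY n, stY n) := by
  subst ha; subst hj
  dsimp only [del, stA, stB]
  rw [if_pos (by rw [fv_val (show 0 ≤ n by omega)]), if_pos (by rw [fv_val (show 1 ≤ n by omega)])]
  simp [stY, fv_eq (show 0 ≤ n by omega)]

lemma del_A_B_bottom {a j : ℕ} (ha : 2 ≤ a) (ha' : a ≤ n) (hj : j = 0) :
    del n (stA n a) (stB n j true true) = (stAm n (a-1), stN n 0) := by
  subst hj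
  dsimp only [del, stA, stB]
  rw [if_pos (by rw [fv_val (show 0 ≤ n by omega)]),
      if_neg (by rw [fv_val ha']; omega), if_pos (by rw [fv_val ha']; omega)]
  simp [stAm, stN, fv_val ha', fv_eq (show a - 1 ≤ n by omega), fv_eq (show 0 ≤ n by omega)]

lemma del_A_B_wait {a j : ℕ} (ha : a ≤ n) (hj : j ≤ n) (hj1 : j ≠ 0) :
    del n (stA n a) (stB n j true true) = (stA n a, stB n j true true) := by
  dsimp only [del, stA, stB]
  rw [if_neg (by rw [fv_val hj]; omega)]

lemma del_B_A_set2 {a j : ℕ} (c1 : Bool) :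
    del n (stB n j c1 false) (stA n a) = (stB n j c1 true, stA n a) := by
  cases c1 <;> rfl

lemma del_B_A_idle {a j : ℕ} :
    del n (stB n j false true) (stA n a) = (stB n j false true, stA n a) := rfl

lemma del_B_A_final {a j : ℕ} (ha : a = 1) (hj : j = 0) (hn : 2 ≤ n) :
    del n (stB n j true true) (stA n a) = (stY n, stY n) := by
  subst ha; subst hj
  dsimp only [del, stA, stB]
  rw [if_pos (by rw [fv_val (show 0 ≤ n by omega)]), if_pos (by rw [fv_val (show 1 ≤ n by omega)])]
  simp [stY, fv_eq (show 0 ≤ n by omega)]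

lemma del_B_A_bottom {a j : ℕ} (ha : 2 ≤ a) (ha' : a ≤ n) (hj : j = 0) :
    del n (stB n j true true) (stA n a) = (stN n 0, stAm n (a-1)) := by
  subst hj
  dsimp only [del, stA, stB]
  rw [if_pos (by rw [fv_val (show 0 ≤ n by omega)]),
      if_neg (by rw [fv_val ha']; omega), if_pos (by rw [fv_val ha']; omega)]
  simp [stAm, stN, fv_val ha', fv_eq (show a - 1 ≤ n by omega), fv_eq (show 0 ≤ n by omega)]

lemma del_B_A_wait {a j : ℕ} (ha : a ≤ n) (hj : j ≤ n) (hj1 : j ≠ 0) :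
    del n (stB n j true true) (stA n a) = (stB n j true true, stA n a) := by
  dsimp only [del, stA, stB]
  rw [if_neg (by rw [fv_val hj]; omega)]

lemma del_B_N_hit {j w : ℕ} (hj : j ≤ n) (hw : w ≤ n) (h : w + 1 = j) :
    del n (stB n j true true) (stN n w) = (stN n j, stB n w false false) := by
  dsimp only [del, stB, stN]
  rw [if_pos (by rw [fv_val hj, fv_val hw]; omega)]

lemma del_B_N_miss {j w : ℕ} (hj : j ≤ n) (hw : w ≤ n) (h : w + 1 ≠ j) :
    del n (stB n j true true) (stN n w) = (stB n j true true, stN n w) := by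
  dsimp only [del, stB, stN]
  rw [if_neg (by rw [fv_val hj, fv_val hw]; omega)]

lemma del_B_N_part {j w : ℕ} (c1 c2 : Bool) (hc : ¬(c1 = true ∧ c2 = true)) :
    del n (stB n j c1 c2) (stN n w) = (stB n j c1 c2, stN n w) := by
  cases c1 <;> cases c2 <;> simp_all <;> rfl

lemma del_N_B_hit {j w : ℕ} (hj : j ≤ n) (hw : w ≤ n) (h : w + 1 = j) :
    del n (stN n w) (stB n j true true) = (stB n w false false, stN n j) := by
  dsimp only [del, stB, stN]
  rw [if_pos (by rw [fv_val hj, fv_val hw]; omega)]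

lemma del_N_B_miss {j w : ℕ} (hj : j ≤ n) (hw : w ≤ n) (h : w + 1 ≠ j) :
    del n (stN n w) (stB n j true true) = (stN n w, stB n j true true) := by
  dsimp only [del, stB, stN]
  rw [if_neg (by rw [fv_val hj, fv_val hw]; omega)]

lemma del_N_B_part {j w : ℕ} (c1 c2 : Bool) (hc : ¬(c1 = true ∧ c2 = true)) :
    del n (stN n w) (stB n j c1 c2) = (stN n w, stB n j c1 c2) := by
  cases c1 <;> cases c2 <;> simp_all <;> rfl

/-- If the initiator is a yes-state, it is unchanged. -/
lemma del_Y_left {x y : Qn n} (h : x.1 = true ∧ x.2.1 = true) : (del n x y).1 = x := by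
  obtain ⟨t1, u1, v1, a1, b1⟩ := x
  obtain ⟨t2, u2, v2, a2, b2⟩ := y
  obtain ⟨h1, h2⟩ := h
  cases h1; cases h2
  cases t2 <;> cases u2 <;> cases a2 <;> cases b2 <;> rfl

/-- If the responder is a yes-state, it stays a yes-state. -/
lemma del_Y_right {x y : Qn n} (h : y.1 = true ∧ y.2.1 = true) :
    (del n x y).2.1 = true ∧ (del n x y).2.2.1 = true := by
  obtain ⟨t1, u1, v1, a1, b1⟩ := x
  obtain ⟨t2, u2, v2, a2, b2⟩ := y
  obtain ⟨h1, h2⟩ := h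
  cases h1; cases h2
  cases t1 <;> cases u1 <;> cases a1 <;> cases b1 <;> exact ⟨rfl, rfl⟩

/-- Spread: yes-state initiator converts a non-yes responder. -/
lemma del_Y_spread {x y : Qn n} (hx : x.1 = true ∧ x.2.1 = true)
    (hy : ¬(y.1 = true ∧ y.2.1 = true)) : (del n x y).2 = stY n := by
  obtain ⟨t1, u1, v1, a1, b1⟩ := x
  obtain ⟨t2, u2, v2, a2, b2⟩ := y
  obtain ⟨h1, h2⟩ := hx
  cases h1; cases h2
  cases t2 <;> cases u2 <;> cases a2 <;> cases b2 <;>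
    simp_all [del, stY, fv_eq (Nat.zero_le n)]

/-- Spread: non-yes initiator meets a yes responder. -/
lemma del_spread_Y {x y : Qn n} (hy : y.1 = true ∧ y.2.1 = true)
    (hx : ¬(x.1 = true ∧ x.2.1 = true)) : (del n x y).1 = stY n := by
  obtain ⟨t1, u1, v1, a1, b1⟩ := x
  obtain ⟨t2, u2, v2, a2, b2⟩ := y
  obtain ⟨h1, h2⟩ := hy
  cases h1; cases h2
  cases t1 <;> cases u1 <;> cases a1 <;> cases b1 <;>
    simp_all [del, stY, fv_eq (Nat.zero_le n)]

end Compute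


/-! ### The invariant -/

section Invariant

variable {V : Type} {n : ℕ}

/-- The (virtual) level of a state. -/
def lvq (n : ℕ) : Qn n → ℕ
  | (false, true, v, false, true) => v.val + 1
  | q => q.2.2.1.val

@[simp] lemma lvq_stN {w : ℕ} (h : w ≤ n) : lvq n (stN n w) = w := by
  simp [lvq, stN, fv_val h]
@[simp] lemma lvq_stAw {v : ℕ} (h : v ≤ n) : lvq n (stAw n v) = v := by
  simp [lvq, stAw, fv_val h]
@[simp] lemma lvq_stA {v : ℕ} (h : v ≤ n) : lvq n (stA n v) = v := by
  simp [lvq, stA, fv_val h]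
@[simp] lemma lvq_stAm {v : ℕ} (h : v ≤ n) : lvq n (stAm n v) = v + 1 := by
  simp [lvq, stAm, fv_val h]
@[simp] lemma lvq_stB {j : ℕ} (c1 c2 : Bool) (h : j ≤ n) : lvq n (stB n j c1 c2) = j := by
  cases c1 <;> cases c2 <;> simp [lvq, stB, fv_val h]

/-- A yes-state. -/
def isY (q : Qn n) : Prop := q.1 = true ∧ q.2.1 = true

@[simp] lemma stN_not_isY {w : ℕ} : ¬ isY (stN n w) := by simp [isY, stN]
@[simp] lemma stAw_not_isY {w : ℕ} : ¬ isY (stAw n w) := by simp [isY, stAw]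
@[simp] lemma stA_not_isY {w : ℕ} : ¬ isY (stA n w) := by simp [isY, stA]
@[simp] lemma stAm_not_isY {w : ℕ} : ¬ isY (stAm n w) := by simp [isY, stAm]
@[simp] lemma stB_not_isY {w : ℕ} {c1 c2 : Bool} : ¬ isY (stB n w c1 c2) := by simp [isY, stB]
@[simp] lemma stY_isY : isY (stY n) := by simp [isY, stY]

variable (n) (E : V × V → Prop)

/-- Every level `0, …, n-1` is occupied. -/
def SurjL (C : V → Qn n) : Prop := ∀ k, k < n → ∃ a, lvq n (C a) = k

/-- All pairs of agents one of which has level `> m` are fully connected. -/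
def VerAb (C : V → Qn n) (m : ℕ) : Prop :=
  ∀ u w : V, u ≠ w → (m + 1 ≤ lvq n (C u) ∨ m + 1 ≤ lvq n (C w)) → E (u, w) ∧ E (w, u)

/-- Normal state with a level `≤ n - 1`. -/
def IsNst (q : Qn n) : Prop := ∃ w, w + 1 ≤ n ∧ q = stN n w

/-- Phase-0 invariant: all agents normal with levels `≤ n-2`, occupancy downward closed. -/
def P0 (C : V → Qn n) : Prop :=
  (∀ a, ∃ w, w + 2 ≤ n ∧ C a = stN n w) ∧
  (∀ k, (∃ a, k + 1 ≤ lvq n (C a)) → ∃ a, lvq n (C a) = k)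

/-- Phase-1 invariant: a unique A-token-family holder exists. -/
def P1 (C : V → Qn n) : Prop :=
  SurjL n C ∧ ∃ h : V,
    ((∃ v, 1 ≤ v ∧ v + 1 ≤ n ∧ C h = stAw n v ∧ (∀ u, u ≠ h → IsNst n (C u)) ∧
        VerAb n E C v)
     ∨ (∃ v, 1 ≤ v ∧ v + 2 ≤ n ∧ C h = stAm n v ∧ (∀ u, u ≠ h → IsNst n (C u)) ∧
        VerAb n E C v)
     ∨ (∃ a j c1 c2, 1 ≤ a ∧ a + 1 ≤ n ∧ j + 1 ≤ a ∧ C h = stA n a ∧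
        ∃ b, b ≠ h ∧ C b = stB n j c1 c2 ∧
          (∀ u, u ≠ h → u ≠ b → IsNst n (C u)) ∧
          VerAb n E C a ∧
          (∀ u, j + 1 ≤ lvq n (C u) → lvq n (C u) + 1 ≤ a → E (u, h) ∧ E (h, u)) ∧
          (c1 = true → E (h, b)) ∧ (c2 = true → E (b, h))))

/-- The global invariant. -/
def InvC (C : V → Qn n) : Prop :=
  ((∃ a, isY (C a)) ∧ IsComplete E) ∨ ((∀ a, ¬ isY (C a)) ∧ (P0 n C ∨ P1 n E C))

lemma surj_congr {C C' : V → Qn n} (h : ∀ a, lvq n (C' a) = lvq n (C a)) :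
    SurjL n C → SurjL n C' := by
  intro hs k hk; obtain ⟨a, ha⟩ := hs k hk; exact ⟨a, by rw [h a, ha]⟩

lemma verab_congr {C C' : V → Qn n} {m : ℕ} (h : ∀ a, lvq n (C' a) = lvq n (C a)) :
    VerAb n E C m → VerAb n E C' m := by
  intro hv u w huw hm; exact hv u w huw (by rwa [h u, h w] at hm)

end Invariant

/-! ### From surjectivity to injectivity of levels -/

lemma surj_inj {V : Type} {n : ℕ} [Finite V] (hcard : Nat.card V = n)
    {C : V → Qn n} (hS : SurjL n C) (hB : ∀ a, lvq n (C a) < n) :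
    ∀ a b : V, lvq n (C a) = lvq n (C b) → a = b := by
  have : Fintype V := Fintype.ofFinite V
  let f : V → Fin n := fun a => ⟨lvq n (C a), hB a⟩
  have hsurj : Function.Surjective f := by
    intro ⟨k, hk⟩; obtain ⟨a, ha⟩ := hS k hk; exact ⟨a, by simp [f, ha]⟩
  have hcards : Fintype.card V = Fintype.card (Fin n) := by
    rw [← Nat.card_eq_fintype_card, hcard, Fintype.card_fin]
  have hbij : Function.Bijective f :=
    (Fintype.bijective_iff_surjective_and_card f).2 ⟨hsurj, hcards⟩
  intro a b hab
  exact hbij.1 (by apply Fin.ext; simpa [f] using hab)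


/-! ### Step lemmas -/

section StepLemmas

variable {V Q : Type} (δ : Q × Q → Q × Q) (C : V → Q) (e : V × V)

lemma stepFn_at1 : stepFn δ C e e.1 = (δ (C e.1, C e.2)).1 := by
  unfold stepFn; rw [if_pos rfl]

lemma stepFn_at2 (hne : e.1 ≠ e.2) : stepFn δ C e e.2 = (δ (C e.1, C e.2)).2 := by
  unfold stepFn; rw [if_neg (Ne.symm hne), if_pos rfl]

lemma stepFn_at_other {w : V} (h1 : w ≠ e.1) (h2 : w ≠ e.2) : stepFn δ C e w = C w := by
  unfold stepFn; rw [if_neg h1, if_neg h2]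

lemma stepFn_noop (h : δ (C e.1, C e.2) = (C e.1, C e.2)) : stepFn δ C e = C := by
  funext w; unfold stepFn
  split_ifs with h1 h2
  · rw [h1, h]
  · rw [h2, h]
  · rfl

end StepLemmas

/-! ### Preservation of the invariant -/

section Preserve

variable {V : Type} {n : ℕ} {E : V × V → Prop}

/-- downward occupancy from P0's closure property -/
lemma inv1_down {C : V → Qn n}
    (h : ∀ k, (∃ a, k + 1 ≤ lvq n (C a)) → ∃ a, lvq n (C a) = k)
    {m : ℕ} (hm : ∃ a, m ≤ lvq n (C a)) : ∃ a, lvq n (C a) = m := by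
  obtain ⟨a, ha⟩ := hm
  rcases Nat.eq_or_lt_of_le ha with heq | hlt
  · exact ⟨a, heq.symm⟩
  · exact h m ⟨a, hlt⟩

lemma inv_step_P0 [Finite V] (hn : 2 ≤ n) (hcard : Nat.card V = n)
    {C : V → Qn n} (e : V × V) (he : E e) (hne : e.1 ≠ e.2)
    (hNoY : ∀ a, ¬ isY (C a)) (hP0 : P0 n C) :
    InvC n E (stepFn (fun p => del n p.1 p.2) C e) := by
  obtain ⟨hst, hinv1⟩ := hP0
  obtain ⟨w1, hw1, hu⟩ := hst e.1
  obtain ⟨w2, hw2, hv⟩ := hst e.2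
  set C' := stepFn (fun p => del n p.1 p.2) C e with hC'
  have h1 : C' e.1 = (del n (C e.1) (C e.2)).1 := stepFn_at1 _ _ _
  have h2 : C' e.2 = (del n (C e.1) (C e.2)).2 := stepFn_at2 _ _ _ hne
  have h3 : ∀ w, w ≠ e.1 → w ≠ e.2 → C' w = C w := fun w a b => stepFn_at_other _ _ _ a b
  by_cases hw : w1 = w2
  · -- same level : promotion or bootstrap
    subst hw
    by_cases hpro : w1 + 3 ≤ n
    · -- promotion
      have hdel : del n (C e.1) (C e.2) = (stN n (w1+1), stN n w1) := by
        rw [hu, hv]; exact del_NN_promote hpro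
      have hc1 : C' e.1 = stN n (w1+1) := by rw [h1, hdel]
      have hc2 : C' e.2 = stN n w1 := by rw [h2, hdel]
      have hlv : ∀ a, a ≠ e.1 → lvq n (C' a) = lvq n (C a) := by
        intro a ha
        by_cases hav : a = e.2
        · subst hav; rw [hc2, hv]
        · rw [h3 a ha hav]
      have hlvu : lvq n (C' e.1) = w1 + 1 := by rw [hc1]; exact lvq_stN (by omega)
      have hlvu' : lvq n (C e.1) = w1 := by rw [hu]; exact lvq_stN (by omega)
      have hlvv : lvq n (C e.2) = w1 := by rw [hv]; exact lvq_stN (by omega)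
      right
      constructor
      · intro a
        by_cases hau : a = e.1
        · subst hau; rw [hc1]; simp
        · by_cases hav : a = e.2
          · subst hav; rw [hc2]; simp
          · rw [h3 a hau hav]; exact hNoY a
      · left
        constructor
        · intro a
          by_cases hau : a = e.1
          · subst hau; rw [hc1]; exact ⟨w1+1, by omega, rfl⟩
          · by_cases hav : a = e.2
            · subst hav; rw [hc2]; exact ⟨w1, by omega, rfl⟩
            · rw [h3 a hau hav]; exact hst a
        · intro k hk
          obtain ⟨a, ha⟩ := hk
          by_cases hku : k = w1 + 1
          · exact ⟨e.1, by rw [hlvu, hku]⟩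
          · by_cases hkw : k = w1
            · exact ⟨e.2, by rw [hlv e.2 (Ne.symm hne), hlvv, hkw]⟩
            · -- k ∉ {w1, w1+1} : get an old witness of level ≥ k+1
              have hold : ∃ a, k + 1 ≤ lvq n (C a) := by
                by_cases hau : a = e.1
                · subst hau
                  rw [hlvu] at ha
                  refine ⟨e.1, ?_⟩
                  rw [hlvu']
                  omega
                · exact ⟨a, by rw [← hlv a hau]; exact ha⟩
              obtain ⟨b, hb⟩ := hinv1 k hold
              by_cases hbu : b = e.1
              · subst hbu
                rw [hlvu'] at hb
                exact ⟨e.2, by rw [hlv e.2 (Ne.symm hne), hlvv, hb]⟩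
              · exact ⟨b, by rw [hlv b hbu, hb]⟩
    · by_cases hboot : w1 + 2 = n
      · -- bootstrap : a leader appears
        have hdel : del n (C e.1) (C e.2) = (stAw n (n-1), stN n w1) := by
          rw [hu, hv]; exact del_NN_boot hpro hboot
        have hc1 : C' e.1 = stAw n (n-1) := by rw [h1, hdel]
        have hc2 : C' e.2 = stN n w1 := by rw [h2, hdel]
        have hlv : ∀ a, a ≠ e.1 → lvq n (C' a) = lvq n (C a) := by
          intro a ha
          by_cases hav : a = e.2
          · subst hav; rw [hc2, hv]
          · rw [h3 a ha hav]
        right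
        constructor
        · intro a
          by_cases hau : a = e.1
          · subst hau; rw [hc1]; simp
          · by_cases hav : a = e.2
            · subst hav; rw [hc2]; simp
            · rw [h3 a hau hav]; exact hNoY a
        · right
          constructor
          · -- surjectivity of levels
            intro k hk
            by_cases hktop : k = n - 1
            · exact ⟨e.1, by rw [hc1, lvq_stAw (by omega), hktop]⟩
            · -- k ≤ n-2 : old occupancy
              have : ∃ a, lvq n (C a) = k := by
                apply inv1_down hinv1
                exact ⟨e.1, by rw [hu, lvq_stN (by omega)]; omega⟩
              obtain ⟨b, hb⟩ := this
              by_cases hbu : b = e.1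
              · subst hbu
                rw [hu, lvq_stN (by omega)] at hb
                exact ⟨e.2, by rw [hlv e.2 (Ne.symm hne), hv, lvq_stN (by omega), hb]⟩
              · exact ⟨b, by rw [hlv b hbu, hb]⟩
          · refine ⟨e.1, Or.inl ⟨n-1, by omega, by omega, hc1, ?_, ?_⟩⟩
            · intro a ha
              by_cases hav : a = e.2
              · subst hav; rw [hc2]; exact ⟨w1, by omega, rfl⟩
              · rw [h3 a ha hav]
                obtain ⟨w, hw, hCa⟩ := hst a
                exact ⟨w, by omega, hCa⟩
            · -- VerAb (n-1) : vacuous since all levels ≤ n-1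
              intro x y hxy hge
              exfalso
              have hx : lvq n (C' x) ≤ n - 1 := by
                by_cases hxu : x = e.1
                · subst hxu; rw [hc1, lvq_stAw (by omega)]
                · rw [hlv x hxu]
                  obtain ⟨w, hw, hCx⟩ := hst x
                  rw [hCx, lvq_stN (by omega)]; omega
              have hy : lvq n (C' y) ≤ n - 1 := by
                by_cases hyu : y = e.1
                · subst hyu; rw [hc1, lvq_stAw (by omega)]
                · rw [hlv y hyu]
                  obtain ⟨w, hw, hCy⟩ := hst y
                  rw [hCy, lvq_stN (by omega)]; omega
              omega
      · exfalso; omega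
  · -- different levels : noop
    have hdel : (fun p => del n p.1 p.2) (C e.1, C e.2) = (C e.1, C e.2) := by
      show del n (C e.1) (C e.2) = _
      rw [hu, hv]; exact del_NN_ne (by omega) (by omega) hw
    rw [hC', stepFn_noop _ _ _ hdel]
    exact Or.inr ⟨hNoY, Or.inl ⟨hst, hinv1⟩⟩


lemma lv_bound_Nst {q : Qn n} (h : IsNst n q) : lvq n q < n := by
  obtain ⟨w, hw, rfl⟩ := h; rw [lvq_stN (by omega)]; omega

lemma noY_Nst {q : Qn n} (h : IsNst n q) : ¬ isY q := by
  obtain ⟨w, hw, rfl⟩ := h; simp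

lemma inv_step_Aw [Finite V] (hn : 2 ≤ n) (hcard : Nat.card V = n)
    {C : V → Qn n} (e : V × V) (he : E e) (hne : e.1 ≠ e.2)
    (hNoY : ∀ a, ¬ isY (C a)) (hP1 : P1 n E C)
    (hSurj : SurjL n C) (hld : V) (v0 : ℕ) (hv1 : 1 ≤ v0) (hv2 : v0 + 1 ≤ n)
    (hCh : C hld = stAw n v0) (hNst : ∀ u, u ≠ hld → IsNst n (C u))
    (hVer : VerAb n E C v0) :
    InvC n E (stepFn (fun p => del n p.1 p.2) C e) := by
  have hB : ∀ a, lvq n (C a) < n := by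
    intro a
    by_cases ha : a = hld
    · subst ha; rw [hCh, lvq_stAw (by omega)]; omega
    · exact lv_bound_Nst (hNst a ha)
  have hinj : ∀ a b : V, lvq n (C a) = lvq n (C b) → a = b := surj_inj hcard hSurj hB
  set C' := stepFn (fun p => del n p.1 p.2) C e with hC'
  have h1 : C' e.1 = (del n (C e.1) (C e.2)).1 := stepFn_at1 _ _ _
  have h2 : C' e.2 = (del n (C e.1) (C e.2)).2 := stepFn_at2 _ _ _ hne
  have h3 : ∀ w, w ≠ e.1 → w ≠ e.2 → C' w = C w := fun w a b => stepFn_at_other _ _ _ a b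
  have hnoop : del n (C e.1) (C e.2) = (C e.1, C e.2) → InvC n E C' := by
    intro hd
    rw [hC', stepFn_noop _ _ _ hd]
    exact Or.inr ⟨hNoY, Or.inr hP1⟩
  by_cases hu : e.1 = hld
  · -- initiator is the Aw holder; responder is normal
    have hv : e.2 ≠ hld := fun hh => hne (hu.trans hh.symm)
    obtain ⟨w, hw, hCv⟩ := hNst e.2 hv
    by_cases hhit : w + 1 = v0
    · -- spawn
      have hdel : del n (C e.1) (C e.2) = (stA n v0, stB n w false false) := by
        rw [hu, hCh, hCv]; exact del_Aw_N_hit (by omega) (by omega) hhit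
      have hc1 : C' e.1 = stA n v0 := by rw [h1, hdel]
      have hc2 : C' e.2 = stB n w false false := by rw [h2, hdel]
      have hlv : ∀ a, lvq n (C' a) = lvq n (C a) := by
        intro a
        by_cases hau : a = e.1
        · subst hau
          rw [hc1, hu, hCh, lvq_stA (by omega), lvq_stAw (by omega)]
        · by_cases hav : a = e.2
          · subst hav; rw [hc2, hCv, lvq_stB _ _ (by omega), lvq_stN (by omega)]
          · rw [h3 a hau hav]
      right
      refine ⟨?_, Or.inr ⟨surj_congr n hlv hSurj, e.1, Or.inr (Or.inr
        ⟨v0, w, false, false, hv1, hv2, by omega, hc1, e.2, Ne.symm hne, hc2, ?_, ?_, ?_, ?_, ?_⟩)⟩⟩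
      · intro a
        by_cases hau : a = e.1
        · subst hau; rw [hc1]; simp
        · by_cases hav : a = e.2
          · subst hav; rw [hc2]; simp
          · rw [h3 a hau hav]; exact hNoY a
      · intro x hx1 hx2
        rw [h3 x (fun hh => hx1 (by rw [hh])) hx2]
        exact hNst x (fun hh => hx1 (by rw [hh, ← hu]))
      · exact verab_congr n E hlv hVer
      · intro x hx1 hx2
        exfalso; rw [hlv x] at hx1 hx2; omega
      · simp
      · simp
    · exact hnoop (by rw [hu, hCh, hCv]; exact del_Aw_N_miss (by omega) (by omega) hhit)
  · by_cases hv : e.2 = hld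
    · -- responder is the Aw holder
      obtain ⟨w, hw, hCu⟩ := hNst e.1 hu
      by_cases hhit : w + 1 = v0
      · have hdel : del n (C e.1) (C e.2) = (stB n w false false, stA n v0) := by
          rw [hv, hCh, hCu]; exact del_N_Aw_hit (by omega) (by omega) hhit
        have hc1 : C' e.1 = stB n w false false := by rw [h1, hdel]
        have hc2 : C' e.2 = stA n v0 := by rw [h2, hdel]
        have hlv : ∀ a, lvq n (C' a) = lvq n (C a) := by
          intro a
          by_cases hau : a = e.1
          · subst hau; rw [hc1, hCu, lvq_stB _ _ (by omega), lvq_stN (by omega)]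
          · by_cases hav : a = e.2
            · subst hav
              rw [hc2, hv, hCh, lvq_stA (by omega), lvq_stAw (by omega)]
            · rw [h3 a hau hav]
        right
        refine ⟨?_, Or.inr ⟨surj_congr n hlv hSurj, e.2, Or.inr (Or.inr
          ⟨v0, w, false, false, hv1, hv2, by omega, hc2, e.1, hne, hc1, ?_, ?_, ?_, ?_, ?_⟩)⟩⟩
        · intro a
          by_cases hau : a = e.1
          · subst hau; rw [hc1]; simp
          · by_cases hav : a = e.2
            · subst hav; rw [hc2]; simp
            · rw [h3 a hau hav]; exact hNoY a
        · intro x hx2 hx1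
          rw [h3 x hx1 hx2]
          exact hNst x (fun hh => hx2 (by rw [hh, ← hv]))
        · exact verab_congr n E hlv hVer
        · intro x hx1 hx2
          exfalso; rw [hlv x] at hx1 hx2; omega
        · simp
        · simp
      · exact hnoop (by rw [hv, hCh, hCu]; exact del_N_Aw_miss (by omega) (by omega) hhit)
    · -- two normal agents : distinct levels, noop
      obtain ⟨w1, hw1, hCu⟩ := hNst e.1 hu
      obtain ⟨w2, hw2, hCv⟩ := hNst e.2 hv
      have hne12 : w1 ≠ w2 := by
        intro hh
        apply hne
        apply hinj
        rw [hCu, hCv, lvq_stN (by omega), lvq_stN (by omega), hh]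
      exact hnoop (by rw [hCu, hCv]; exact del_NN_ne (by omega) (by omega) hne12)

lemma inv_step_Am [Finite V] (hn : 2 ≤ n) (hcard : Nat.card V = n)
    {C : V → Qn n} (e : V × V) (he : E e) (hne : e.1 ≠ e.2)
    (hNoY : ∀ a, ¬ isY (C a)) (hP1 : P1 n E C)
    (hSurj : SurjL n C) (hld : V) (v0 : ℕ) (hv1 : 1 ≤ v0) (hv2 : v0 + 2 ≤ n)
    (hCh : C hld = stAm n v0) (hNst : ∀ u, u ≠ hld → IsNst n (C u))
    (hVer : VerAb n E C v0) :
    InvC n E (stepFn (fun p => del n p.1 p.2) C e) := by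
  have hB : ∀ a, lvq n (C a) < n := by
    intro a
    by_cases ha : a = hld
    · subst ha; rw [hCh, lvq_stAm (by omega)]; omega
    · exact lv_bound_Nst (hNst a ha)
  have hinj : ∀ a b : V, lvq n (C a) = lvq n (C b) → a = b := surj_inj hcard hSurj hB
  set C' := stepFn (fun p => del n p.1 p.2) C e with hC'
  have h1 : C' e.1 = (del n (C e.1) (C e.2)).1 := stepFn_at1 _ _ _
  have h2 : C' e.2 = (del n (C e.1) (C e.2)).2 := stepFn_at2 _ _ _ hne
  have h3 : ∀ w, w ≠ e.1 → w ≠ e.2 → C' w = C w := fun w a b => stepFn_at_other _ _ _ a b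
  have hnoop : del n (C e.1) (C e.2) = (C e.1, C e.2) → InvC n E C' := by
    intro hd
    rw [hC', stepFn_noop _ _ _ hd]
    exact Or.inr ⟨hNoY, Or.inr hP1⟩
  by_cases hu : e.1 = hld
  · have hv : e.2 ≠ hld := fun hh => hne (hu.trans hh.symm)
    obtain ⟨w, hw, hCv⟩ := hNst e.2 hv
    by_cases hhit : w = v0
    · -- landing : holder moves to e.2 and awaits
      have hdel : del n (C e.1) (C e.2) = (stN n (v0+1), stAw n v0) := by
        rw [hu, hCh, hCv]; exact del_Am_N_hit (by omega) (by omega) hhit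
      have hc1 : C' e.1 = stN n (v0+1) := by rw [h1, hdel]
      have hc2 : C' e.2 = stAw n v0 := by rw [h2, hdel]
      have hlv : ∀ a, lvq n (C' a) = lvq n (C a) := by
        intro a
        by_cases hau : a = e.1
        · subst hau
          rw [hc1, hu, hCh, lvq_stN (by omega), lvq_stAm (by omega)]
        · by_cases hav : a = e.2
          · subst hav
            rw [hc2, hCv, lvq_stAw (by omega), lvq_stN (by omega), hhit]
          · rw [h3 a hau hav]
      right
      refine ⟨?_, Or.inr ⟨surj_congr n hlv hSurj, e.2, Or.inl
        ⟨v0, hv1, by omega, hc2, ?_, verab_congr n E hlv hVer⟩⟩⟩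
      · intro a
        by_cases hau : a = e.1
        · subst hau; rw [hc1]; simp
        · by_cases hav : a = e.2
          · subst hav; rw [hc2]; simp
          · rw [h3 a hau hav]; exact hNoY a
      · intro x hx2
        by_cases hx1 : x = e.1
        · subst hx1; rw [hc1]; exact ⟨v0+1, by omega, rfl⟩
        · rw [h3 x hx1 hx2]
          exact hNst x (fun hh => hx1 (by rw [hh, ← hu]))
    · exact hnoop (by rw [hu, hCh, hCv]; exact del_Am_N_miss (by omega) (by omega) hhit)
  · by_cases hv : e.2 = hld
    · obtain ⟨w, hw, hCu⟩ := hNst e.1 hu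
      by_cases hhit : w = v0
      · have hdel : del n (C e.1) (C e.2) = (stAw n v0, stN n (v0+1)) := by
          rw [hv, hCh, hCu]; exact del_N_Am_hit (by omega) (by omega) hhit
        have hc1 : C' e.1 = stAw n v0 := by rw [h1, hdel]
        have hc2 : C' e.2 = stN n (v0+1) := by rw [h2, hdel]
        have hlv : ∀ a, lvq n (C' a) = lvq n (C a) := by
          intro a
          by_cases hau : a = e.1
          · subst hau
            rw [hc1, hCu, lvq_stAw (by omega), lvq_stN (by omega), hhit]
          · by_cases hav : a = e.2
            · subst hav
              rw [hc2, hv, hCh, lvq_stN (by omega), lvq_stAm (by omega)]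
            · rw [h3 a hau hav]
        right
        refine ⟨?_, Or.inr ⟨surj_congr n hlv hSurj, e.1, Or.inl
          ⟨v0, hv1, by omega, hc1, ?_, verab_congr n E hlv hVer⟩⟩⟩
        · intro a
          by_cases hau : a = e.1
          · subst hau; rw [hc1]; simp
          · by_cases hav : a = e.2
            · subst hav; rw [hc2]; simp
            · rw [h3 a hau hav]; exact hNoY a
        · intro x hx1
          by_cases hx2 : x = e.2
          · subst hx2; rw [hc2]; exact ⟨v0+1, by omega, rfl⟩
          · rw [h3 x hx1 hx2]
            exact hNst x (fun hh => hx2 (by rw [hh, ← hv]))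
      · exact hnoop (by rw [hv, hCh, hCu]; exact del_N_Am_miss (by omega) (by omega) hhit)
    · obtain ⟨w1, hw1, hCu⟩ := hNst e.1 hu
      obtain ⟨w2, hw2, hCv⟩ := hNst e.2 hv
      have hne12 : w1 ≠ w2 := by
        intro hh
        apply hne
        apply hinj
        rw [hCu, hCv, lvq_stN (by omega), lvq_stN (by omega), hh]
      exact hnoop (by rw [hCu, hCv]; exact del_NN_ne (by omega) (by omega) hne12)


lemma inv_step_A [Finite V] (hn : 2 ≤ n) (hcard : Nat.card V = n)
    {C : V → Qn n} (e : V × V) (he : E e) (hne : e.1 ≠ e.2)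
    (hNoY : ∀ a, ¬ isY (C a)) (hP1 : P1 n E C)
    (hSurj : SurjL n C) (hld b : V) (a0 j0 : ℕ) (c1 c2 : Bool)
    (ha1 : 1 ≤ a0) (ha2 : a0 + 1 ≤ n) (hja : j0 + 1 ≤ a0)
    (hCh : C hld = stA n a0) (hbh : b ≠ hld) (hCb : C b = stB n j0 c1 c2)
    (hNst : ∀ u, u ≠ hld → u ≠ b → IsNst n (C u))
    (hVer : VerAb n E C a0)
    (hMid : ∀ u, j0 + 1 ≤ lvq n (C u) → lvq n (C u) + 1 ≤ a0 → E (u, hld) ∧ E (hld, u))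
    (hc1 : c1 = true → E (hld, b)) (hc2 : c2 = true → E (b, hld)) :
    InvC n E (stepFn (fun p => del n p.1 p.2) C e) := by
  have hlvh : lvq n (C hld) = a0 := by rw [hCh, lvq_stA (by omega)]
  have hlvb : lvq n (C b) = j0 := by rw [hCb, lvq_stB _ _ (by omega)]
  have hB : ∀ a, lvq n (C a) < n := by
    intro a
    by_cases hah : a = hld
    · subst hah; omega
    · by_cases hab : a = b
      · subst hab; omega
      · exact lv_bound_Nst (hNst a hah hab)
  have hinj : ∀ a b : V, lvq n (C a) = lvq n (C b) → a = b := surj_inj hcard hSurj hB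
  -- key claim used for the bottom transition and for completeness
  have hVer' : c1 = true → c2 = true → j0 = 0 →
      ∀ x y, x ≠ y → a0 ≤ lvq n (C x) → E (x, y) ∧ E (y, x) := by
    intro hcc1 hcc2 hj0 x y hxy hx
    rcases Nat.eq_or_lt_of_le hx with heq | hlt
    · -- x is the holder
      have hxh : x = hld := hinj x hld (by omega)
      subst hxh
      by_cases hy : a0 + 1 ≤ lvq n (C y)
      · obtain ⟨p, q⟩ := hVer x y hxy (Or.inr hy)
        exact ⟨p, q⟩
      · by_cases hy0 : 1 ≤ lvq n (C y)
        · have hy1 : lvq n (C y) + 1 ≤ a0 := by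
            have : lvq n (C y) ≠ a0 := fun hh => hxy (hinj y x (by omega)).symm
            omega
          obtain ⟨p, q⟩ := hMid y (by omega) hy1
          exact ⟨q, p⟩
        · have hyb : y = b := hinj y b (by omega)
          subst hyb
          exact ⟨hc1 hcc1, hc2 hcc2⟩
    · exact hVer x y hxy (Or.inl hlt)
  have hcomp : c1 = true → c2 = true → j0 = 0 → a0 = 1 → IsComplete E := by
    intro hcc1 hcc2 hj0 ha0 x y hxy
    by_cases hx : a0 ≤ lvq n (C x)
    · exact (hVer' hcc1 hcc2 hj0 x y hxy hx).1
    · by_cases hy : a0 ≤ lvq n (C y)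
      · exact (hVer' hcc1 hcc2 hj0 y x (Ne.symm hxy) hy).2
      · exfalso
        have : lvq n (C x) = lvq n (C y) := by omega
        exact hxy (hinj x y this)
  set C' := stepFn (fun p => del n p.1 p.2) C e with hC'
  have h1 : C' e.1 = (del n (C e.1) (C e.2)).1 := stepFn_at1 _ _ _
  have h2 : C' e.2 = (del n (C e.1) (C e.2)).2 := stepFn_at2 _ _ _ hne
  have h3 : ∀ w, w ≠ e.1 → w ≠ e.2 → C' w = C w := fun w a b => stepFn_at_other _ _ _ a b
  have hee : E (e.1, e.2) := by rwa [Prod.mk.eta]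
  have hnoop : del n (C e.1) (C e.2) = (C e.1, C e.2) → InvC n E C' := by
    intro hd
    rw [hC', stepFn_noop _ _ _ hd]
    exact Or.inr ⟨hNoY, Or.inr hP1⟩
  by_cases hu1 : e.1 = hld
  · subst hu1
    by_cases hv2 : e.2 = b
    · -- holder meets the B-token
      subst hv2
      cases c1 with
      | false =>
        -- set the first handshake bit
        have hdel : del n (C e.1) (C e.2) = (stA n a0, stB n j0 true c2) := by
          rw [hCh, hCb]; exact del_A_B_set1 c2
        have hq1 : C' e.1 = stA n a0 := by rw [h1, hdel]
        have hq2 : C' e.2 = stB n j0 true c2 := by rw [h2, hdel]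
        have hlv : ∀ a, lvq n (C' a) = lvq n (C a) := by
          intro a
          by_cases hau : a = e.1
          · subst hau; rw [hq1, hCh]
          · by_cases hav : a = e.2
            · subst hav; rw [hq2, hCb, lvq_stB _ _ (by omega), lvq_stB _ _ (by omega)]
            · rw [h3 a hau hav]
        right
        refine ⟨?_, Or.inr ⟨surj_congr n hlv hSurj, e.1, Or.inr (Or.inr
          ⟨a0, j0, true, c2, ha1, ha2, hja, hq1, e.2, Ne.symm hne, hq2, ?_, ?_, ?_, ?_, ?_⟩)⟩⟩
        · intro a
          by_cases hau : a = e.1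
          · subst hau; rw [hq1]; simp
          · by_cases hav : a = e.2
            · subst hav; rw [hq2]; simp
            · rw [h3 a hau hav]; exact hNoY a
        · intro x hx1 hx2
          rw [h3 x hx1 hx2]; exact hNst x hx1 hx2
        · exact verab_congr n E hlv hVer
        · intro x hx1 hx2
          rw [hlv x] at hx1 hx2
          exact hMid x hx1 hx2
        · intro _; exact hee
        · exact hc2
      | true =>
        cases c2 with
        | false =>
          exact hnoop (by rw [hCh, hCb]; exact del_A_B_idle)
        | true =>
          by_cases hj0 : j0 = 0
          · by_cases ha0 : a0 = 1
            · -- the final transition: both agents turn yes, graph is complete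
              have hdel : del n (C e.1) (C e.2) = (stY n, stY n) := by
                rw [hCh, hCb]; exact del_A_B_final ha0 hj0 hn
              left
              refine ⟨⟨e.1, ?_⟩, hcomp rfl rfl hj0 ha0⟩
              rw [h1, hdel]; simp
            · -- the bottom transition
              have hdel : del n (C e.1) (C e.2) = (stAm n (a0-1), stN n 0) := by
                rw [hCh, hCb]; exact del_A_B_bottom (by omega) (by omega) hj0
              have hq1 : C' e.1 = stAm n (a0-1) := by rw [h1, hdel]
              have hq2 : C' e.2 = stN n 0 := by rw [h2, hdel]
              have hlv : ∀ a, lvq n (C' a) = lvq n (C a) := by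
                intro a
                by_cases hau : a = e.1
                · subst hau
                  rw [hq1, hCh, lvq_stAm (by omega), lvq_stA (by omega)]; omega
                · by_cases hav : a = e.2
                  · subst hav
                    rw [hq2, hCb, lvq_stN (by omega), lvq_stB _ _ (by omega), hj0]
                  · rw [h3 a hau hav]
              have hVold : VerAb n E C (a0 - 1) := by
                intro x y hxy hge
                rcases hge with hx | hy
                · exact hVer' rfl rfl hj0 x y hxy (by omega)
                · obtain ⟨p, q⟩ := hVer' rfl rfl hj0 y x (Ne.symm hxy) (by omega)
                  exact ⟨q, p⟩
              right
              refine ⟨?_, Or.inr ⟨surj_congr n hlv hSurj, e.1, Or.inr (Or.inl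
                ⟨a0 - 1, by omega, by omega, hq1, ?_, verab_congr n E hlv hVold⟩)⟩⟩
              · intro a
                by_cases hau : a = e.1
                · subst hau; rw [hq1]; simp
                · by_cases hav : a = e.2
                  · subst hav; rw [hq2]; simp
                  · rw [h3 a hau hav]; exact hNoY a
              · intro x hx1
                by_cases hx2 : x = e.2
                · subst hx2; rw [hq2]; exact ⟨0, by omega, rfl⟩
                · rw [h3 x hx1 hx2]; exact hNst x hx1 hx2
          · exact hnoop (by rw [hCh, hCb]; exact del_A_B_wait (by omega) (by omega) hj0)
    · -- holder meets a normal agent : noop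
      obtain ⟨w, hw, hCv⟩ := hNst e.2 (Ne.symm hne) hv2
      exact hnoop (by rw [hCh, hCv]; exact del_A_N)
  · by_cases hu2 : e.1 = b
    · subst hu2
      by_cases hv1 : e.2 = hld
      · -- B-token meets the holder
        subst hv1
        cases c2 with
        | false =>
          have hdel : del n (C e.1) (C e.2) = (stB n j0 c1 true, stA n a0) := by
            rw [hCh, hCb]; exact del_B_A_set2 c1
          have hq1 : C' e.1 = stB n j0 c1 true := by rw [h1, hdel]
          have hq2 : C' e.2 = stA n a0 := by rw [h2, hdel]
          have hlv : ∀ a, lvq n (C' a) = lvq n (C a) := by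
            intro a
            by_cases hau : a = e.1
            · subst hau; rw [hq1, hCb, lvq_stB _ _ (by omega), lvq_stB _ _ (by omega)]
            · by_cases hav : a = e.2
              · subst hav; rw [hq2, hCh]
              · rw [h3 a hau hav]
          right
          refine ⟨?_, Or.inr ⟨surj_congr n hlv hSurj, e.2, Or.inr (Or.inr
            ⟨a0, j0, c1, true, ha1, ha2, hja, hq2, e.1, hne, hq1, ?_, ?_, ?_, ?_, ?_⟩)⟩⟩
          · intro a
            by_cases hau : a = e.1
            · subst hau; rw [hq1]; simp
            · by_cases hav : a = e.2
              · subst hav; rw [hq2]; simp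
              · rw [h3 a hau hav]; exact hNoY a
          · intro x hx2 hx1
            rw [h3 x hx1 hx2]; exact hNst x hx2 hx1
          · exact verab_congr n E hlv hVer
          · intro x hx1 hx2
            rw [hlv x] at hx1 hx2
            exact hMid x hx1 hx2
          · exact hc1
          · intro _; exact hee
        | true =>
          cases c1 with
          | false =>
            exact hnoop (by rw [hCh, hCb]; exact del_B_A_idle)
          | true =>
            by_cases hj0 : j0 = 0
            · by_cases ha0 : a0 = 1
              · have hdel : del n (C e.1) (C e.2) = (stY n, stY n) := by
                  rw [hCh, hCb]; exact del_B_A_final ha0 hj0 hn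
                left
                refine ⟨⟨e.1, ?_⟩, hcomp rfl rfl hj0 ha0⟩
                rw [h1, hdel]; simp
              · have hdel : del n (C e.1) (C e.2) = (stN n 0, stAm n (a0-1)) := by
                  rw [hCh, hCb]; exact del_B_A_bottom (by omega) (by omega) hj0
                have hq1 : C' e.1 = stN n 0 := by rw [h1, hdel]
                have hq2 : C' e.2 = stAm n (a0-1) := by rw [h2, hdel]
                have hlv : ∀ a, lvq n (C' a) = lvq n (C a) := by
                  intro a
                  by_cases hau : a = e.1
                  · subst hau
                    rw [hq1, hCb, lvq_stN (by omega), lvq_stB _ _ (by omega), hj0]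
                  · by_cases hav : a = e.2
                    · subst hav
                      rw [hq2, hCh, lvq_stAm (by omega), lvq_stA (by omega)]; omega
                    · rw [h3 a hau hav]
                have hVold : VerAb n E C (a0 - 1) := by
                  intro x y hxy hge
                  rcases hge with hx | hy
                  · exact hVer' rfl rfl hj0 x y hxy (by omega)
                  · obtain ⟨p, q⟩ := hVer' rfl rfl hj0 y x (Ne.symm hxy) (by omega)
                    exact ⟨q, p⟩
                right
                refine ⟨?_, Or.inr ⟨surj_congr n hlv hSurj, e.2, Or.inr (Or.inl
                  ⟨a0 - 1, by omega, by omega, hq2, ?_, verab_congr n E hlv hVold⟩)⟩⟩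
                · intro a
                  by_cases hau : a = e.1
                  · subst hau; rw [hq1]; simp
                  · by_cases hav : a = e.2
                    · subst hav; rw [hq2]; simp
                    · rw [h3 a hau hav]; exact hNoY a
                · intro x hx2
                  by_cases hx1 : x = e.1
                  · subst hx1; rw [hq1]; exact ⟨0, by omega, rfl⟩
                  · rw [h3 x hx1 hx2]; exact hNst x hx2 hx1
            · exact hnoop (by rw [hCh, hCb]; exact del_B_A_wait (by omega) (by omega) hj0)
      · -- B-token meets a normal agent
        obtain ⟨w, hw, hCv⟩ := hNst e.2 hv1 (Ne.symm hne)
        by_cases hcc : c1 = true ∧ c2 = true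
        · obtain ⟨hcc1, hcc2⟩ := hcc
          subst hcc1; subst hcc2
          by_cases hhit : w + 1 = j0
          · -- the B-token moves down
            have hdel : del n (C e.1) (C e.2) = (stN n j0, stB n w false false) := by
              rw [hCb, hCv]; exact del_B_N_hit (by omega) (by omega) hhit
            have hq1 : C' e.1 = stN n j0 := by rw [h1, hdel]
            have hq2 : C' e.2 = stB n w false false := by rw [h2, hdel]
            have hlv : ∀ a, lvq n (C' a) = lvq n (C a) := by
              intro a
              by_cases hau : a = e.1
              · subst hau; rw [hq1, hCb, lvq_stN (by omega), lvq_stB _ _ (by omega)]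
              · by_cases hav : a = e.2
                · subst hav; rw [hq2, hCv, lvq_stB _ _ (by omega), lvq_stN (by omega)]
                · rw [h3 a hau hav]
            have hldu : hld ≠ e.1 := fun hh => hbh hh.symm
            have hldv : hld ≠ e.2 := fun hh => hv1 hh.symm
            have hCh' : C' hld = stA n a0 := by rw [h3 hld hldu hldv, hCh]
            right
            refine ⟨?_, Or.inr ⟨surj_congr n hlv hSurj, hld, Or.inr (Or.inr
              ⟨a0, w, false, false, ha1, ha2, by omega, hCh', e.2, hv1, hq2, ?_, ?_, ?_, ?_, ?_⟩)⟩⟩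
            · intro a
              by_cases hau : a = e.1
              · subst hau; rw [hq1]; simp
              · by_cases hav : a = e.2
                · subst hav; rw [hq2]; simp
                · rw [h3 a hau hav]; exact hNoY a
            · intro x hx1 hx2
              by_cases hxb : x = e.1
              · subst hxb; rw [hq1]; exact ⟨j0, by omega, rfl⟩
              · rw [h3 x hxb hx2]; exact hNst x hx1 hxb
            · exact verab_congr n E hlv hVer
            · intro x hx1 hx2
              rw [hlv x] at hx1 hx2
              by_cases hxj : lvq n (C x) = j0
              · have hxb : x = e.1 := hinj x e.1 (by omega)
                subst hxb
                exact ⟨hc2 rfl, hc1 rfl⟩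
              · exact hMid x (by omega) hx2
            · simp
            · simp
          · exact hnoop (by rw [hCb, hCv]; exact del_B_N_miss (by omega) (by omega) hhit)
        · exact hnoop (by rw [hCb, hCv]; exact del_B_N_part c1 c2 hcc)
    · -- e.1 is a normal agent
      obtain ⟨w, hw, hCu⟩ := hNst e.1 hu1 hu2
      by_cases hv1 : e.2 = hld
      · subst hv1
        exact hnoop (by rw [hCh, hCu]; exact del_N_A)
      · by_cases hv2 : e.2 = b
        · -- normal agent meets the B-token
          subst hv2
          by_cases hcc : c1 = true ∧ c2 = true
          · obtain ⟨hcc1, hcc2⟩ := hcc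
            subst hcc1; subst hcc2
            by_cases hhit : w + 1 = j0
            · have hdel : del n (C e.1) (C e.2) = (stB n w false false, stN n j0) := by
                rw [hCb, hCu]; exact del_N_B_hit (by omega) (by omega) hhit
              have hq1 : C' e.1 = stB n w false false := by rw [h1, hdel]
              have hq2 : C' e.2 = stN n j0 := by rw [h2, hdel]
              have hlv : ∀ a, lvq n (C' a) = lvq n (C a) := by
                intro a
                by_cases hau : a = e.1
                · subst hau; rw [hq1, hCu, lvq_stB _ _ (by omega), lvq_stN (by omega)]
                · by_cases hav : a = e.2
                  · subst hav; rw [hq2, hCb, lvq_stN (by omega), lvq_stB _ _ (by omega)]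
                  · rw [h3 a hau hav]
              have hldu : hld ≠ e.1 := fun hh => hu1 hh.symm
              have hldv : hld ≠ e.2 := fun hh => hbh hh.symm
              have hCh' : C' hld = stA n a0 := by rw [h3 hld hldu hldv, hCh]
              right
              refine ⟨?_, Or.inr ⟨surj_congr n hlv hSurj, hld, Or.inr (Or.inr
                ⟨a0, w, false, false, ha1, ha2, by omega, hCh', e.1, fun hh => hu1 hh, hq1, ?_, ?_, ?_, ?_, ?_⟩)⟩⟩
              · intro a
                by_cases hau : a = e.1
                · subst hau; rw [hq1]; simp
                · by_cases hav : a = e.2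
                  · subst hav; rw [hq2]; simp
                  · rw [h3 a hau hav]; exact hNoY a
              · intro x hx1 hx2
                by_cases hxb : x = e.2
                · subst hxb; rw [hq2]; exact ⟨j0, by omega, rfl⟩
                · rw [h3 x hx2 hxb]; exact hNst x hx1 hxb
              · exact verab_congr n E hlv hVer
              · intro x hx1 hx2
                rw [hlv x] at hx1 hx2
                by_cases hxj : lvq n (C x) = j0
                · have hxb : x = e.2 := hinj x e.2 (by omega)
                  subst hxb
                  exact ⟨hc2 rfl, hc1 rfl⟩
                · exact hMid x (by omega) hx2
              · simp
              · simp
            · exact hnoop (by rw [hCb, hCu]; exact del_N_B_miss (by omega) (by omega) hhit)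
          · exact hnoop (by rw [hCb, hCu]; exact del_N_B_part c1 c2 hcc)
        · -- two normal agents
          obtain ⟨w2, hw2, hCv⟩ := hNst e.2 hv1 hv2
          have hne12 : w ≠ w2 := by
            intro hh
            apply hne
            apply hinj
            rw [hCu, hCv, lvq_stN (by omega), lvq_stN (by omega), hh]
          exact hnoop (by rw [hCu, hCv]; exact del_NN_ne (by omega) (by omega) hne12)

end Preserve




/-! ### Master preservation, initial configuration -/

section Master

variable {V : Type} {n : ℕ} {E : V × V → Prop}

lemma inv_step [Finite V] (hn : 2 ≤ n) (hcard : Nat.card V = n)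
    (hnl : ∀ v : V, ¬ E (v, v)) {C : V → Qn n} (hI : InvC n E C)
    (e : V × V) (he : E e) :
    InvC n E (stepFn (fun p => del n p.1 p.2) C e) := by
  have hee : E (e.1, e.2) := by rwa [Prod.mk.eta]
  have hne : e.1 ≠ e.2 := by
    intro hh
    rw [hh] at hee
    exact hnl e.2 hee
  rcases hI with ⟨⟨a, hYa⟩, hcomp⟩ | ⟨hNoY, hP0 | hP1⟩
  · left
    refine ⟨?_, hcomp⟩
    by_cases hau : a = e.1
    · subst hau
      refine ⟨e.1, ?_⟩
      have h1 : stepFn (fun p => del n p.1 p.2) C e e.1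
          = (del n (C e.1) (C e.2)).1 := stepFn_at1 _ _ _
      rw [h1, del_Y_left hYa]
      exact hYa
    · by_cases hav : a = e.2
      · subst hav
        refine ⟨e.2, ?_⟩
        have h2 : stepFn (fun p => del n p.1 p.2) C e e.2
            = (del n (C e.1) (C e.2)).2 := stepFn_at2 _ _ _ hne
        rw [h2]
        exact del_Y_right hYa
      · exact ⟨a, by rw [stepFn_at_other _ _ _ hau hav]; exact hYa⟩
  · exact inv_step_P0 hn hcard e he hne hNoY hP0
  · obtain ⟨hSurj, hld, hcase⟩ := hP1
    rcases hcase with ⟨v0, hv1, hv2, hCh, hNst, hVer⟩ |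
      ⟨v0, hv1, hv2, hCh, hNst, hVer⟩ |
      ⟨a0, j0, c1, c2, ha1, ha2, hja, hCh, b, hbh, hCb, hNst, hVer, hMid, hc1, hc2⟩
    · exact inv_step_Aw hn hcard e he hne hNoY ⟨hSurj, hld,
        Or.inl ⟨v0, hv1, hv2, hCh, hNst, hVer⟩⟩ hSurj hld v0 hv1 hv2 hCh hNst hVer
    · exact inv_step_Am hn hcard e he hne hNoY ⟨hSurj, hld,
        Or.inr (Or.inl ⟨v0, hv1, hv2, hCh, hNst, hVer⟩)⟩ hSurj hld v0 hv1 hv2 hCh hNst hVer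
    · exact inv_step_A hn hcard e he hne hNoY ⟨hSurj, hld,
        Or.inr (Or.inr ⟨a0, j0, c1, c2, ha1, ha2, hja, hCh, b, hbh, hCb, hNst, hVer, hMid, hc1, hc2⟩)⟩
        hSurj hld b a0 j0 c1 c2 ha1 ha2 hja hCh hbh hCb hNst hVer hMid hc1 hc2

lemma inv_init (hn : 2 ≤ n) : InvC n E (fun _ : V => stN n 0) := by
  right
  refine ⟨fun a => by simp, Or.inl ⟨fun a => ⟨0, by omega, rfl⟩, ?_⟩⟩
  rintro k ⟨a, ha⟩
  rw [lvq_stN (by omega)] at ha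
  omega

end Master

/-! ### Silent configurations -/

section Silentsec

variable {V : Type} {n : ℕ} {E : V × V → Prop}

/-- A silent configuration: every arc interaction is a no-op. -/
def Silent (n : ℕ) (E : V × V → Prop) (C : V → Qn n) : Prop :=
  ∀ e : V × V, E e → del n (C e.1) (C e.2) = (C e.1, C e.2)

lemma silent_complete [Finite V] (hn : 2 ≤ n) (hcard : Nat.card V = n)
    (hcom : IsComplete E) {C : V → Qn n} (hI : InvC n E C) (hS : Silent n E C) :
    ∀ a, isY (C a) := by
  have : Fintype V := Fintype.ofFinite V
  rcases hI with ⟨⟨a0, hY⟩, _⟩ | ⟨hNoY, hP0 | hP1⟩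
  · -- spread from a yes agent
    intro a
    by_contra hna
    have hne : a0 ≠ a := fun hh => hna (hh ▸ hY)
    have harc : E (a0, a) := hcom a0 a hne
    have := hS (a0, a) harc
    have h2 := congrArg Prod.snd this
    simp only at h2
    rw [del_Y_spread hY hna] at h2
    exact hna (by rw [← h2]; simp)
  · -- all normal : pigeonhole gives two agents at the same level
    exfalso
    obtain ⟨hst, _⟩ := hP0
    have hcv : Fintype.card V = n := by rw [← Nat.card_eq_fintype_card, hcard]
    have hlt : Fintype.card (Fin (n-1)) < Fintype.card V := by
      rw [Fintype.card_fin, hcv]; omega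
    have hbnd : ∀ a : V, lvq n (C a) < n - 1 := by
      intro a
      obtain ⟨w, hw, hCa⟩ := hst a
      rw [hCa, lvq_stN (by omega)]; omega
    obtain ⟨a, b, hab, hfab⟩ :=
      Fintype.exists_ne_map_eq_of_card_lt (fun a : V => (⟨lvq n (C a), hbnd a⟩ : Fin (n-1))) hlt
    have hlv : lvq n (C a) = lvq n (C b) := by
      simpa [Fin.ext_iff] using hfab
    obtain ⟨w1, hw1, hCa⟩ := hst a
    obtain ⟨w2, hw2, hCb⟩ := hst b
    have hw12 : w1 = w2 := by
      rw [hCa, hCb, lvq_stN (by omega), lvq_stN (by omega)] at hlv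
      exact hlv
    subst hw12
    have harc : E (a, b) := hcom a b hab
    have := hS (a, b) harc
    simp only [hCa, hCb] at this
    by_cases hpro : w1 + 3 ≤ n
    · rw [del_NN_promote hpro] at this
      have h1 := congrArg Prod.fst this
      simp only at h1
      have := stN_inj (n := n) (by omega) (by omega) h1
      omega
    · rw [del_NN_boot hpro (by omega)] at this
      have h1 := congrArg Prod.fst this
      simp [stAw, stN] at h1
  · -- a holder exists : some transition is enabled, contradiction with silence
    exfalso
    obtain ⟨hSurj, hld, hcase⟩ := hP1
    have hB : ∀ a, lvq n (C a) < n := by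
      intro a
      rcases hcase with ⟨v0, hv1, hv2, hCh, hNst, _⟩ | ⟨v0, hv1, hv2, hCh, hNst, _⟩ |
        ⟨a0, j0, c1, c2, ha1, ha2, hja, hCh, b, hbh, hCb, hNst, _, _, _, _⟩
      · by_cases ha : a = hld
        · subst ha; rw [hCh, lvq_stAw (by omega)]; omega
        · exact lv_bound_Nst (hNst a ha)
      · by_cases ha : a = hld
        · subst ha; rw [hCh, lvq_stAm (by omega)]; omega
        · exact lv_bound_Nst (hNst a ha)
      · by_cases ha : a = hld
        · subst ha; rw [hCh, lvq_stA (by omega)]; omega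
        · by_cases hab : a = b
          · subst hab; rw [hCb, lvq_stB _ _ (by omega)]; omega
          · exact lv_bound_Nst (hNst a ha hab)
    have hinj : ∀ a b : V, lvq n (C a) = lvq n (C b) → a = b := surj_inj hcard hSurj hB
    rcases hcase with ⟨v0, hv1, hv2, hCh, hNst, hVer⟩ | ⟨v0, hv1, hv2, hCh, hNst, hVer⟩ |
      ⟨a0, j0, c1, c2, ha1, ha2, hja, hCh, b, hbh, hCb, hNst, hVer, hMid, hc1, hc2⟩
    · -- Aw holder: spawning is enabled
      obtain ⟨z, hz⟩ := hSurj (v0 - 1) (by omega)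
      have hzh : z ≠ hld := by
        intro hh
        rw [hh, hCh, lvq_stAw (by omega)] at hz
        omega
      obtain ⟨w, hw, hCz⟩ := hNst z hzh
      have hwv : w + 1 = v0 := by
        rw [hCz, lvq_stN (by omega)] at hz
        omega
      have harc : E (hld, z) := hcom hld z (Ne.symm hzh)
      have := hS (hld, z) harc
      simp only [hCh, hCz] at this
      rw [del_Aw_N_hit (by omega) (by omega) hwv] at this
      have h1 := congrArg Prod.fst this
      simp [stA, stAw] at h1
    · -- Am holder: landing is enabled
      obtain ⟨z, hz⟩ := hSurj v0 (by omega)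
      have hzh : z ≠ hld := by
        intro hh
        rw [hh, hCh, lvq_stAm (by omega)] at hz
        omega
      obtain ⟨w, hw, hCz⟩ := hNst z hzh
      have hwv : w = v0 := by
        rw [hCz, lvq_stN (by omega)] at hz
        omega
      have harc : E (hld, z) := hcom hld z (Ne.symm hzh)
      have := hS (hld, z) harc
      simp only [hCh, hCz] at this
      rw [del_Am_N_hit (by omega) (by omega) hwv] at this
      have h1 := congrArg Prod.fst this
      simp [stN, stAm] at h1
    · -- active holder with B-token
      cases c1 with
      | false =>
        have harc : E (hld, b) := hcom hld b (Ne.symm hbh)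
        have := hS (hld, b) harc
        simp only [hCh, hCb] at this
        rw [del_A_B_set1 c2] at this
        have h2 := congrArg Prod.snd this
        simp [stB] at h2
      | true =>
        cases c2 with
        | false =>
          have harc : E (b, hld) := hcom b hld hbh
          have := hS (b, hld) harc
          simp only [hCh, hCb] at this
          rw [del_B_A_set2 true] at this
          have h1 := congrArg Prod.fst this
          simp [stB] at h1
        | true =>
          by_cases hj0 : j0 = 0
          · have harc : E (hld, b) := hcom hld b (Ne.symm hbh)
            have := hS (hld, b) harc
            simp only [hCh, hCb] at this
            by_cases ha0 : a0 = 1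
            · rw [del_A_B_final ha0 hj0 hn] at this
              have h1 := congrArg Prod.fst this
              simp [stY, stA] at h1
            · rw [del_A_B_bottom (by omega) (by omega) hj0] at this
              have h1 := congrArg Prod.fst this
              simp [stAm, stA] at h1
          · -- the B-token can move down
            obtain ⟨z, hz⟩ := hSurj (j0 - 1) (by omega)
            have hzh : z ≠ hld := by
              intro hh
              rw [hh, hCh, lvq_stA (by omega)] at hz
              omega
            have hzb : z ≠ b := by
              intro hh
              rw [hh, hCb, lvq_stB _ _ (by omega)] at hz
              omega
            obtain ⟨w, hw, hCz⟩ := hNst z hzh hzb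
            have hwj : w + 1 = j0 := by
              rw [hCz, lvq_stN (by omega)] at hz
              omega
            have := hS (b, z) (hcom b z (fun hh => hzb hh.symm))
            simp only [hCb, hCz] at this
            rw [del_B_N_hit (by omega) (by omega) hwj] at this
            have h1 := congrArg Prod.fst this
            simp [stN, stB] at h1

lemma silent_noY (hcom : ¬ IsComplete E) {C : V → Qn n} (hI : InvC n E C) :
    ∀ a, ¬ isY (C a) := by
  rcases hI with ⟨_, hcomp⟩ | ⟨hNoY, _⟩
  · exact absurd hcomp hcom
  · exact hNoY

end Silentsec


/-! ### Termination: the potential forces eventual silence -/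

section Termination

variable {V : Type} {n : ℕ} {E : V × V → Prop}

lemma pot_le (q : Qn n) : pot n q ≤ n * (100*(n+2)) + 100*(n+2) := by
  obtain ⟨t1, u1, v, a1, b1⟩ := q
  have hv : v.val ≤ n := by have := v.isLt; omega
  have e1 : (n - v.val) * (100*(n+2)) + v.val * (100*(n+2)) = n*(100*(n+2)) := by
    rw [← Nat.add_mul]; congr 1; omega
  cases t1 <;> cases u1 <;> cases a1 <;> cases b1 <;>
    dsimp only [pot, Bool.toNat, cond_true, cond_false] <;> omega

lemma stepFn_as_update {Q : Type} (δ : Q × Q → Q × Q) (C : V → Q) (e : V × V)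
    (hne : e.1 ≠ e.2) :
    stepFn δ C e = Function.update (Function.update C e.1 (δ (C e.1, C e.2)).1)
      e.2 (δ (C e.1, C e.2)).2 := by
  funext w
  by_cases h1 : w = e.1
  · subst h1
    rw [stepFn_at1, Function.update_of_ne hne, Function.update_self]
  · by_cases h2 : w = e.2
    · subst h2
      rw [stepFn_at2 _ _ _ hne, Function.update_self]
    · rw [stepFn_at_other _ _ _ h1 h2, Function.update_of_ne h2, Function.update_of_ne h1]

lemma comp_update {Q : Type} (g : V → Q) (f : Q → ℕ) (a : V) (q : Q) :
    (fun x => f (Function.update g a q x)) = Function.update (fun x => f (g x)) a (f q) := by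
  funext x
  by_cases hx : x = a
  · subst hx; rw [Function.update_self, Function.update_self]
  · rw [Function.update_of_ne hx, Function.update_of_ne hx]

lemma phi_step [Fintype V] (C : V → Qn n) (e : V × V) (hne : e.1 ≠ e.2) :
    stepFn (fun p : Qn n × Qn n => del n p.1 p.2) C e = C ∨
      ∑ a, pot n (C a) < ∑ a, pot n (stepFn (fun p : Qn n × Qn n => del n p.1 p.2) C e a) := by
  rcases pot_del n (C e.1) (C e.2) with hd | hd
  · left
    exact stepFn_noop _ _ _ hd
  · right
    have hupd := stepFn_as_update (fun p : Qn n × Qn n => del n p.1 p.2) C e hne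
    rw [hupd]
    have hco : (fun a => pot n ((Function.update (Function.update C e.1
        (del n (C e.1) (C e.2)).1) e.2 (del n (C e.1) (C e.2)).2) a))
        = Function.update (fun a => pot n ((Function.update C e.1
            (del n (C e.1) (C e.2)).1) a)) e.2 (pot n (del n (C e.1) (C e.2)).2) :=
      comp_update _ _ _ _
    have hco2 : (fun a => pot n ((Function.update C e.1 (del n (C e.1) (C e.2)).1) a))
        = Function.update (fun a => pot n (C a)) e.1 (pot n (del n (C e.1) (C e.2)).1) :=
      comp_update _ _ _ _
    calc ∑ a, pot n (C a)
        = pot n (C e.2) + ∑ a ∈ Finset.univ \ {e.2}, pot n (C a) := by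
          rw [← Finset.sum_update_of_mem (Finset.mem_univ e.2)]
          apply Finset.sum_congr rfl
          intro x _
          by_cases hx : x = e.2
          · subst hx; rw [Function.update_self]
          · rw [Function.update_of_ne hx]
      _ = pot n (C e.2) + (pot n (C e.1) + ∑ a ∈ (Finset.univ \ {e.2}) \ {e.1}, pot n (C a)) := by
          congr 1
          rw [← Finset.sum_update_of_mem
            (Finset.mem_sdiff.mpr ⟨Finset.mem_univ _, Finset.notMem_singleton.mpr hne⟩)]
          apply Finset.sum_congr rfl
          intro x _
          by_cases hx : x = e.1
          · subst hx; rw [Function.update_self]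
          · rw [Function.update_of_ne hx]
      _ < pot n (del n (C e.1) (C e.2)).2 + (pot n (del n (C e.1) (C e.2)).1
            + ∑ a ∈ (Finset.univ \ {e.2}) \ {e.1}, pot n (C a)) := by omega
      _ = ∑ a, pot n ((Function.update (Function.update C e.1
            (del n (C e.1) (C e.2)).1) e.2 (del n (C e.1) (C e.2)).2) a) := by
          rw [hco, Finset.sum_update_of_mem (Finset.mem_univ e.2)]
          congr 1
          rw [show ∑ a ∈ Finset.univ \ {e.2}, (fun a => pot n ((Function.update C e.1
              (del n (C e.1) (C e.2)).1) a)) a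
            = pot n (del n (C e.1) (C e.2)).1 + ∑ a ∈ (Finset.univ \ {e.2}) \ {e.1},
                (fun a => pot n (C a)) a from by
            rw [hco2]
            exact Finset.sum_update_of_mem
              (Finset.mem_sdiff.mpr ⟨Finset.mem_univ _, Finset.notMem_singleton.mpr hne⟩)
              (fun a => pot n (C a)) (pot n (del n (C e.1) (C e.2)).1)]

lemma eventually_silent [Fintype V] (hn : 2 ≤ n) (hnl : ∀ v : V, ¬ E (v, v))
    (γ : ℕ → V × V) (hval : ValidSched E γ) :
    ∃ T, ∀ t, T ≤ t →
      conf (fun p : Qn n × Qn n => del n p.1 p.2) (stN n 0) γ t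
        = conf (fun p : Qn n × Qn n => del n p.1 p.2) (stN n 0) γ T := by
  set c := conf (fun p : Qn n × Qn n => del n p.1 p.2) (stN n 0) γ with hcdef
  set Φ : ℕ → ℕ := fun t => ∑ a, pot n (c t a) with hΦ
  have hne : ∀ t, (γ t).1 ≠ (γ t).2 := by
    intro t hh
    have hee : E ((γ t).1, (γ t).2) := by rw [Prod.mk.eta]; exact hval t
    rw [hh] at hee
    exact hnl _ hee
  have hstep : ∀ t, c (t+1) = c t ∨ Φ t < Φ (t+1) := by
    intro t
    rcases phi_step (c t) (γ t) (hne t) with h | h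
    · left; exact h
    · right; exact h
  have hmono : ∀ s t, s ≤ t → Φ s ≤ Φ t := by
    intro s t hst
    induction t, hst using Nat.le_induction with
    | base => exact le_rfl
    | succ t hst ih =>
      rcases hstep t with h | h
      · have : Φ (t+1) = Φ t := by rw [hΦ]; simp only [h]
        omega
      · omega
  have hbound : ∀ t, Φ t ≤ Fintype.card V * (n * (100*(n+2)) + 100*(n+2)) := by
    intro t
    calc Φ t ≤ ∑ _a : V, (n * (100*(n+2)) + 100*(n+2)) :=
          Finset.sum_le_sum (fun a _ => pot_le _)
      _ = Fintype.card V * (n * (100*(n+2)) + 100*(n+2)) := by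
          rw [Finset.sum_const, Finset.card_univ, smul_eq_mul]
  by_contra hcon
  push_neg at hcon
  have key : ∀ t T, T ≤ t → c t ≠ c T → ∃ s, T ≤ s ∧ Φ s < Φ (s+1) := by
    intro t
    induction t with
    | zero =>
      intro T hT hne'
      exfalso
      have : T = 0 := by omega
      subst this
      exact hne' rfl
    | succ t ih =>
      intro T hT hne'
      have hTt : T ≤ t := by
        rcases Nat.lt_or_ge T (t+1) with h | h
        · omega
        · exfalso
          have : T = t + 1 := by omega
          subst this
          exact hne' rfl
      by_cases hc : c (t+1) = c t
      · exact ih T hTt (by rw [← hc]; exact hne')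
      · rcases hstep t with h | h
        · exact absurd h hc
        · exact ⟨t, hTt, h⟩
  have grow : ∀ k, ∃ t, Φ 0 + k ≤ Φ t := by
    intro k
    induction k with
    | zero => exact ⟨0, by omega⟩
    | succ k ih =>
      obtain ⟨t, ht⟩ := ih
      obtain ⟨t', hTt', hnet'⟩ := hcon t
      obtain ⟨s, hts, hlt⟩ := key t' t hTt' hnet'
      have := hmono t s hts
      exact ⟨s+1, by omega⟩
  obtain ⟨t, ht⟩ := grow (Fintype.card V * (n * (100*(n+2)) + 100*(n+2)) + 1)
  have := hbound t
  omega

lemma silent_reach {C : V → Qn n} (hS : Silent n E C) :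
    ∀ C', Reach (fun p : Qn n × Qn n => del n p.1 p.2) E C C' → C' = C := by
  intro C' h
  induction h with
  | refl => rfl
  | tail _ hbc ih =>
    obtain ⟨e, he, hc⟩ := hbc
    rw [hc, ih]
    exact stepFn_noop _ _ _ (hS e he)

end Termination

theorem statement0 (n : ℕ) (hn : 2 ≤ n) :
    ∃ (Q : Type), Finite Q ∧ Nat.card Q ≤ 16 * (n + 1) ∧
      ∃ (ρ : Q) (out : Q → Bool) (δ : Q × Q → Q × Q),
        ∀ (V : Type) (E : V × V → Prop),
          Nat.card V = n → IsCommGraph E → SolvesWF ρ out δ E := by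
  refine ⟨Qn n, inferInstance, ?_, stN n 0, outF n, (fun p => del n p.1 p.2), ?_⟩
  · have hcq : Nat.card (Qn n) = 16 * (n + 1) := by
      simp only [Qn, Nat.card_prod]
      rw [Nat.card_eq_fintype_card, Nat.card_eq_fintype_card]
      simp [Nat.card_eq_fintype_card]
      ring
    omega
  · intro V E hcard hG γ hWF
    have hfin : Finite V := ((Nat.card_ne_zero).mp (by omega)).2
    have hfty : Fintype V := Fintype.ofFinite V
    obtain ⟨hval, hfair⟩ := hWF
    have hnl : ∀ v : V, ¬ E (v, v) := hG.1
    obtain ⟨T, hT⟩ := eventually_silent (E := E) hn hnl γ hval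
    have hSil : Silent n E (conf (fun p : Qn n × Qn n => del n p.1 p.2) (stN n 0) γ T) := by
      intro e he
      obtain ⟨s, hTs, hγ⟩ := hfair e he T
      set c := conf (fun p : Qn n × Qn n => del n p.1 p.2) (stN n 0) γ with hcdef
      have hne : e.1 ≠ e.2 := by
        intro hh
        have hee : E (e.1, e.2) := by rwa [Prod.mk.eta]
        rw [hh] at hee
        exact hnl _ hee
      have hstep : c (s+1) = stepFn (fun p : Qn n × Qn n => del n p.1 p.2) (c s) (γ s) := rfl
      have h1 : c (s+1) = c T := hT (s+1) (by omega)
      have h2 : c s = c T := hT s hTs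
      have hfix : stepFn (fun p : Qn n × Qn n => del n p.1 p.2) (c T) e = c T := by
        rw [← h2, ← hγ, ← hstep, h1, h2]
      have ha := congrFun hfix e.1
      rw [stepFn_at1] at ha
      have hb := congrFun hfix e.2
      rw [stepFn_at2 _ _ _ hne] at hb
      exact Prod.ext ha hb
    have hInv : ∀ t, InvC n E (conf (fun p : Qn n × Qn n => del n p.1 p.2) (stN n 0) γ t) := by
      intro t
      induction t with
      | zero => exact inv_init hn
      | succ t ih => exact inv_step hn hcard hnl ih (γ t) (hval t)
    refine ⟨T, ?_, ?_, ?_⟩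
    · intro C' hreach a
      rw [silent_reach hSil C' hreach]
    · intro hcomp a
      have hy := silent_complete hn hcard hcomp (hInv T) hSil a
      simp [outF, hy.1, hy.2]
    · intro hncomp a
      have hy := silent_noY hncomp (hInv T) a
      simp only [isY, not_and] at hy
      simp only [outF]
      cases hq1 : (conf (fun p : Qn n × Qn n => del n p.1 p.2) (stN n 0) γ T a).1
      · simp
      · cases hq2 : (conf (fun p : Qn n × Qn n => del n p.1 p.2) (stN n 0) γ T a).2.1
        · simp
        · exact absurd hq2 (hy hq1)

end

end CGI
end

section
/- For every integer P ≥ 4, there is no population protocol with output set {yes,no} that solves the complete graph identification problem under weak fairness on the class of all communication graphs with at most P vertices. -/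
/-! Population protocols on communication graphs: general framework. -/

namespace CGI

attribute [local instance] Classical.propDecidable

noncomputable section

variable {V Q : Type*}

/-! ### Auxiliary development -/

/-- K₂: the complete graph on `Bool`. -/
def E2 : Bool × Bool → Prop := fun e => e.1 ≠ e.2

/-- A weakly fair schedule on K₂. -/
def γ2 : ℕ → Bool × Bool := fun t => if t % 2 = 0 then (false, true) else (true, false)

/-- The bidirected 4-cycle on `Fin 4`. -/
def E4 : Fin 4 × Fin 4 → Prop := fun e =>
  e = (0,1) ∨ e = (1,0) ∨ e = (1,2) ∨ e = (2,1) ∨ e = (2,3) ∨ e = (3,2) ∨ e = (3,0) ∨ e = (0,3)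

/-- A weakly fair schedule on the 4-cycle, simulating `γ2` two steps at a time. -/
def γ4 : ℕ → Fin 4 × Fin 4 := fun t =>
  if t % 8 = 0 then (0,1) else if t % 8 = 1 then (2,3)
  else if t % 8 = 2 then (1,0) else if t % 8 = 3 then (3,2)
  else if t % 8 = 4 then (0,3) else if t % 8 = 5 then (2,1)
  else if t % 8 = 6 then (1,2) else (3,0)

/-- The covering (parity) map from the 4-cycle to K₂. -/
def pr : Fin 4 → Bool := fun i => decide (i.val % 2 = 1)

lemma pr0 : pr 0 = false := rfl
lemma pr1 : pr 1 = true := rfl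
lemma pr2 : pr 2 = false := rfl
lemma pr3 : pr 3 = true := rfl

lemma reach_of_le {E : V × V → Prop} {γ : ℕ → V × V} (hγ : ValidSched E γ)
    (δ : Q × Q → Q × Q) (ρ : Q) {m n : ℕ} (h : m ≤ n) :
    Reach δ E (conf δ ρ γ m) (conf δ ρ γ n) := by
  induction n, h using Nat.le_induction with
  | base => exact Relation.ReflTransGen.refl
  | succ n hmn ih =>
    exact ih.tail ⟨γ n, hγ n, rfl⟩

lemma commGraph_E2 : IsCommGraph E2 := by
  constructor
  · intro v h; exact h rfl
  · intro u w
    by_cases h : u = w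
    · exact h ▸ Relation.ReflTransGen.refl
    · exact Relation.ReflTransGen.single (Or.inl h)

lemma complete_E2 : IsComplete E2 := fun u w h => h

lemma wf_γ2 : WeaklyFair E2 γ2 := by
  constructor
  · intro t
    unfold γ2 E2
    split <;> simp
  · rintro ⟨a, b⟩ he t
    have : a ≠ b := he
    cases a <;> cases b <;> first
    | exact absurd rfl this
    | (refine ⟨2 * t, by omega, ?_⟩
       have h : (2*t) % 2 = 0 := by omega
       simp [γ2, h]
       done)
    | (refine ⟨2 * t + 1, by omega, ?_⟩
       have h : (2*t+1) % 2 = 1 := by omega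
       simp [γ2, h]
       done)

lemma commGraph_E4 : IsCommGraph E4 := by
  constructor
  · intro v h
    fin_cases v <;> simp [E4, Prod.ext_iff] at h
  · intro u w
    have hsym : Symmetric (fun a b : Fin 4 => E4 (a, b) ∨ E4 (b, a)) :=
      fun a b h => Or.symm h
    have adj : ∀ a b : Fin 4, E4 (a, b) →
        Relation.ReflTransGen (fun a b : Fin 4 => E4 (a, b) ∨ E4 (b, a)) a b :=
      fun a b h => Relation.ReflTransGen.single (Or.inl h)
    have h01 := adj 0 1 (by simp [E4])
    have h12 := adj 1 2 (by simp [E4])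
    have h23 := adj 2 3 (by simp [E4])
    have from0 : ∀ x : Fin 4,
        Relation.ReflTransGen (fun a b : Fin 4 => E4 (a, b) ∨ E4 (b, a)) 0 x := by
      intro x
      fin_cases x
      · exact Relation.ReflTransGen.refl
      · exact h01
      · exact h01.trans h12
      · exact (h01.trans h12).trans h23
    exact ((@Relation.ReflTransGen.symmetric _ _ ⟨hsym⟩).symm _ _ (from0 u)).trans (from0 w)

lemma notComplete_E4 : ¬ IsComplete E4 := by
  intro h
  have h02 : ((0:Fin 4) ≠ 2) := by simp
  have := h 0 2 h02
  simp [E4, Prod.ext_iff] at this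

lemma wf_γ4 : WeaklyFair E4 γ4 := by
  constructor
  · intro t
    have h8 : t % 8 = 0 ∨ t % 8 = 1 ∨ t % 8 = 2 ∨ t % 8 = 3 ∨ t % 8 = 4 ∨
        t % 8 = 5 ∨ t % 8 = 6 ∨ t % 8 = 7 := by omega
    rcases h8 with h|h|h|h|h|h|h|h <;> simp [γ4, h, E4]
  · rintro ⟨a, b⟩ he t
    rcases he with h|h|h|h|h|h|h|h <;> rw [Prod.ext_iff] at h <;>
      obtain ⟨ha, hb⟩ := h <;> subst ha <;> subst hb <;>
      first
      | (refine ⟨8*(t+1)+0, by omega, ?_⟩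
         have h : (8*(t+1)+0) % 8 = 0 := by omega
         simp [γ4, h]
         done)
      | (refine ⟨8*(t+1)+1, by omega, ?_⟩
         have h : (8*(t+1)+1) % 8 = 1 := by omega
         simp [γ4, h]
         done)
      | (refine ⟨8*(t+1)+2, by omega, ?_⟩
         have h : (8*(t+1)+2) % 8 = 2 := by omega
         simp [γ4, h]
         done)
      | (refine ⟨8*(t+1)+3, by omega, ?_⟩
         have h : (8*(t+1)+3) % 8 = 3 := by omega
         simp [γ4, h]
         done)
      | (refine ⟨8*(t+1)+4, by omega, ?_⟩
         have h : (8*(t+1)+4) % 8 = 4 := by omega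
         simp [γ4, h]
         done)
      | (refine ⟨8*(t+1)+5, by omega, ?_⟩
         have h : (8*(t+1)+5) % 8 = 5 := by omega
         simp [γ4, h]
         done)
      | (refine ⟨8*(t+1)+6, by omega, ?_⟩
         have h : (8*(t+1)+6) % 8 = 6 := by omega
         simp [γ4, h]
         done)
      | (refine ⟨8*(t+1)+7, by omega, ?_⟩
         have h : (8*(t+1)+7) % 8 = 7 := by omega
         simp [γ4, h]
         done)

/-- The key lifting invariant: after `2t` steps of `γ4`, each agent of the 4-cycle
is in the same state as its projection after `t` steps of `γ2`. -/
lemma lift_conf {Q : Type} (δ : Q × Q → Q × Q) (ρ : Q) :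
    ∀ t : ℕ, ∀ v : Fin 4, conf δ ρ γ4 (2*t) v = conf δ ρ γ2 t (pr v) := by
  intro t
  induction t with
  | zero => intro v; rfl
  | succ t ih =>
    have h2 : 2 * (t+1) = (2*t + 1) + 1 := by ring
    rw [h2]
    have h4 : t % 4 = 0 ∨ t % 4 = 1 ∨ t % 4 = 2 ∨ t % 4 = 3 := by omega
    rcases h4 with h|h|h|h
    · have g1 : γ4 (2*t) = (0,1) := by
        have : (2*t) % 8 = 0 := by omega
        simp [γ4, this]
      have g2 : γ4 (2*t+1) = (2,3) := by
        have : (2*t+1) % 8 = 1 := by omega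
        simp [γ4, this]
      have b1 : γ2 t = (false, true) := by
        have : t % 2 = 0 := by omega
        simp [γ2, this]
      intro v
      show stepFn δ (stepFn δ (conf δ ρ γ4 (2*t)) (γ4 (2*t))) (γ4 (2*t+1)) v
          = stepFn δ (conf δ ρ γ2 t) (γ2 t) (pr v)
      rw [g1, g2, b1]
      fin_cases v <;> simp [stepFn, ih, pr0, pr1, pr2, pr3]
    · have g1 : γ4 (2*t) = (1,0) := by
        have : (2*t) % 8 = 2 := by omega
        simp [γ4, this]
      have g2 : γ4 (2*t+1) = (3,2) := by
        have : (2*t+1) % 8 = 3 := by omega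
        simp [γ4, this]
      have b1 : γ2 t = (true, false) := by
        have : t % 2 = 1 := by omega
        simp [γ2, this]
      intro v
      show stepFn δ (stepFn δ (conf δ ρ γ4 (2*t)) (γ4 (2*t))) (γ4 (2*t+1)) v
          = stepFn δ (conf δ ρ γ2 t) (γ2 t) (pr v)
      rw [g1, g2, b1]
      fin_cases v <;> simp [stepFn, ih, pr0, pr1, pr2, pr3]
    · have g1 : γ4 (2*t) = (0,3) := by
        have : (2*t) % 8 = 4 := by omega
        simp [γ4, this]
      have g2 : γ4 (2*t+1) = (2,1) := by
        have : (2*t+1) % 8 = 5 := by omega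
        simp [γ4, this]
      have b1 : γ2 t = (false, true) := by
        have : t % 2 = 0 := by omega
        simp [γ2, this]
      intro v
      show stepFn δ (stepFn δ (conf δ ρ γ4 (2*t)) (γ4 (2*t))) (γ4 (2*t+1)) v
          = stepFn δ (conf δ ρ γ2 t) (γ2 t) (pr v)
      rw [g1, g2, b1]
      fin_cases v <;> simp [stepFn, ih, pr0, pr1, pr2, pr3]
    · have g1 : γ4 (2*t) = (1,2) := by
        have : (2*t) % 8 = 6 := by omega
        simp [γ4, this]
      have g2 : γ4 (2*t+1) = (3,0) := by
        have : (2*t+1) % 8 = 7 := by omega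
        simp [γ4, this]
      have b1 : γ2 t = (true, false) := by
        have : t % 2 = 1 := by omega
        simp [γ2, this]
      intro v
      show stepFn δ (stepFn δ (conf δ ρ γ4 (2*t)) (γ4 (2*t))) (γ4 (2*t+1)) v
          = stepFn δ (conf δ ρ γ2 t) (γ2 t) (pr v)
      rw [g1, g2, b1]
      fin_cases v <;> simp [stepFn, ih, pr0, pr1, pr2, pr3]

theorem statement5 (P : ℕ) (hP : 4 ≤ P) :
    ¬ ∃ (Q : Type) (ρ : Q) (out : Q → Bool) (δ : Q × Q → Q × Q),
        ∀ (V : Type) (E : V × V → Prop),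
          2 ≤ Nat.card V → Nat.card V ≤ P → IsCommGraph E → SolvesWF ρ out δ E := by
  rintro ⟨Q, ρ, out, δ, h⟩
  have h2 := h Bool E2 (by simp) (by simp; omega) commGraph_E2 γ2 wf_γ2
  obtain ⟨s, hs_st, hs_yes, -⟩ := h2
  have hyes : ∀ a, out (conf δ ρ γ2 s a) = true := hs_yes complete_E2
  have h4 := h (Fin 4) E4 (by simp) (by simpa using hP) commGraph_E4 γ4 wf_γ4
  obtain ⟨t, ht_st, -, ht_no⟩ := h4
  have hno : ∀ a, out (conf δ ρ γ4 t a) = false := ht_no notComplete_E4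
  set u := max s t with hu
  have r2 : Reach δ E2 (conf δ ρ γ2 s) (conf δ ρ γ2 u) :=
    reach_of_le wf_γ2.1 δ ρ (le_max_left s t)
  have r4 : Reach δ E4 (conf δ ρ γ4 t) (conf δ ρ γ4 (2*u)) :=
    reach_of_le wf_γ4.1 δ ρ (by omega)
  have A : out (conf δ ρ γ2 u false) = true := by
    rw [hs_st _ r2 false]; exact hyes false
  have B : out (conf δ ρ γ4 (2*u) 0) = false := by
    rw [ht_st _ r4 0]; exact hno 0
  rw [lift_conf δ ρ u 0] at B
  have : pr 0 = false := rfl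
  rw [this] at B
  rw [A] at B
  exact Bool.noConfusion B

end

end CGI
end

section
/- Fix n ≥ 2 and let G=(V,E) be any communication graph with n vertices. In every configuration C reachable from the initial configuration under the protocol CIW_n, the sum of cnt(C(a)) over all agents a whose phase in C is 3 or 4 equals the number of agents whose phase in C is 3 or 4. -/
/-!
Population protocols: framework and the protocol `CIW_n`.

STATEMENT 7: In every configuration `C` reachable from the initial configuration
under the protocol `CIW_n` on a communication graph with `n` vertices, the sum of
`cnt` over all agents whose phase is 3 or 4 equals the number of such agents.
-/

namespace CGI

attribute [local instance] Classical.propDecidable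

noncomputable section

variable {V Q : Type*}

/-- States of the protocol `CIW_n`. -/
structure StW where
  leader : Bool  -- `true` = L, `false` = F
  phase : ℕ
  mode : Bool    -- `false` = 0, `true` = 1
  cnt : ℕ
  deriving DecidableEq

/-- The initial state `(L,1,0,1)` of `CIW_n`. -/
def initW : StW := ⟨true, 1, false, 1⟩

/-- The transition rules (R1)–(R5) of `CIW_n` for initiator `a` and responder `b`;
additions to `cnt` are truncated at `n`. -/
def ciwPair (n : ℕ) (a b : StW) : StW × StW :=
  if a.leader = true ∧ b.leader = true then
    -- (R1)
    let c := min n (a.cnt + b.cnt)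
    if c = n then (⟨true, 2, a.mode, 0⟩, ⟨false, b.phase, b.mode, 0⟩)
    else (⟨true, a.phase, a.mode, c⟩, ⟨false, b.phase, b.mode, 0⟩)
  else if a.leader = true ∧ a.phase = 2 ∧ a.mode = b.mode then
    -- (R2)
    let c := min n (a.cnt + 1)
    if c = n - 1 then (⟨true, 3, !a.mode, 1⟩, ⟨b.leader, b.phase, !b.mode, b.cnt⟩)
    else (⟨true, a.phase, a.mode, c⟩, ⟨b.leader, b.phase, !b.mode, b.cnt⟩)
  else if a.leader = true ∧ a.phase = 3 ∧ b.phase = 1 then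
    -- (R3)
    (⟨false, a.phase, a.mode, a.cnt⟩, ⟨true, 2, b.mode, b.cnt⟩)
  else if a.phase = 3 ∧ b.phase = 3 ∧ 0 < a.cnt ∧ 0 < b.cnt then
    -- (R4)
    let c := min n (a.cnt + b.cnt)
    if c = n then (⟨a.leader, 4, a.mode, c⟩, ⟨b.leader, b.phase, b.mode, 0⟩)
    else (⟨a.leader, a.phase, a.mode, c⟩, ⟨b.leader, b.phase, b.mode, 0⟩)
  else if a.phase = 4 then
    -- (R5)
    (a, ⟨b.leader, 4, b.mode, b.cnt⟩)
  else (a, b)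

/-- The transition function of `CIW_n`. -/
def ciwδ (n : ℕ) : StW × StW → StW × StW := fun p => ciwPair n p.1 p.2

/-- Weighted contribution of a state to the sum in the statement. -/
def Fc (q : StW) : ℕ := if q.phase = 3 ∨ q.phase = 4 then q.cnt else 0

/-- Contribution of a state to the count in the statement. -/
def Gc (q : StW) : ℕ := if q.phase = 3 ∨ q.phase = 4 then 1 else 0

lemma Gc_le_one (q : StW) : Gc q ≤ 1 := by
  unfold Gc; split <;> omega

/-- The inductive invariant. -/
def Inv (n : ℕ) {W : Type} [Fintype W] (C : W → StW) : Prop :=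
  ((∀ w, (C w).phase = 1) ∧ (∀ w, (C w).leader = true → 1 ≤ (C w).cnt) ∧
    (∀ w, ¬ (C w).leader = true → (C w).cnt = 0) ∧ (∑ w, (C w).cnt) = n)
  ∨ ((∃! w, (C w).leader = true) ∧ (∑ w, Fc (C w)) = (∑ w, Gc (C w)) ∧
      ((∃ w, (C w).phase = 4) → ∀ w, (C w).phase = 3 ∨ (C w).phase = 4))

lemma sum_split {W : Type} [Fintype W] (f : W → ℕ) (u v : W) (huv : u ≠ v) :
    (∑ w, f w) = f u + f v + ∑ w ∈ (Finset.univ.erase u).erase v, f w := by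
  rw [← Finset.add_sum_erase _ f (Finset.mem_univ u),
    ← Finset.add_sum_erase _ f (Finset.mem_erase.2 ⟨huv.symm, Finset.mem_univ v⟩)]
  ring

lemma eu_congr {W : Type} {C D : W → StW} (h : ∀ w, (D w).leader = (C w).leader)
    (hu : ∃! w, (C w).leader = true) : ∃! w, (D w).leader = true := by
  obtain ⟨l, h1, h2⟩ := hu
  refine ⟨l, ?_, fun y hy => h2 y ?_⟩
  · show (D l).leader = true
    rw [h l]; exact h1
  · show (C y).leader = true
    rw [← h y]; exact hy

lemma inv_step_s7 {W : Type} [Fintype W] {n : ℕ} (hV : Fintype.card W = n)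
    {C : W → StW} {u v : W} (huv : u ≠ v) (h : Inv n C) :
    Inv n (stepFn (ciwδ n) C (u, v)) := by
  set D := stepFn (ciwδ n) C (u, v) with hD
  have hDu : D u = (ciwPair n (C u) (C v)).1 := by
    simp [hD, stepFn, ciwδ]
  have hDv : D v = (ciwPair n (C u) (C v)).2 := by
    simp [hD, stepFn, ciwδ, huv.symm]
  have hDw : ∀ w, w ≠ u → w ≠ v → D w = C w := by
    intro w h1 h2
    simp [hD, stepFn, h1, h2]
  have key : ∀ f : StW → ℕ, (∑ w, f (D w)) =
      f (D u) + f (D v) + ∑ w ∈ (Finset.univ.erase u).erase v, f (C w) := by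
    intro f
    rw [sum_split (fun w => f (D w)) u v huv]
    congr 1
    refine Finset.sum_congr rfl fun w hw => ?_
    have h1 := Finset.mem_erase.1 hw
    have h2 := Finset.mem_erase.1 h1.2
    rw [hDw w h2.1 h1.1]
  have keyC : ∀ f : StW → ℕ, (∑ w, f (C w)) =
      f (C u) + f (C v) + ∑ w ∈ (Finset.univ.erase u).erase v, f (C w) :=
    fun f => sum_split (fun w => f (C w)) u v huv
  by_cases h1 : (C u).leader = true ∧ (C v).leader = true
  · -- (R1) applies; in case B this is impossible.
    rcases h with ⟨hph, hl, hf, hs⟩ | ⟨hul, hFG, h4⟩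
    · -- case A
      have hab_le : (C u).cnt + (C v).cnt ≤ n := by
        have hsplit := keyC (fun q => q.cnt)
        rw [hs] at hsplit
        omega
      by_cases hc : min n ((C u).cnt + (C v).cnt) = n
      · have hp : ciwPair n (C u) (C v) =
            (⟨true, 2, (C u).mode, 0⟩, ⟨false, (C v).phase, (C v).mode, 0⟩) := by
          simp only [ciwPair]
          rw [if_pos h1, if_pos hc]
        have hnle : n ≤ (C u).cnt + (C v).cnt := min_eq_left_iff.mp hc
        have hsplit := keyC (fun q => q.cnt)
        rw [hs] at hsplit
        have hT : (∑ w ∈ (Finset.univ.erase u).erase v, (C w).cnt) = 0 := by omega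
        refine Or.inr ⟨?_, ?_, ?_⟩
        · refine ⟨u, ?_, ?_⟩
          · show (D u).leader = true
            rw [hDu, hp]
          · intro y hy
            have hy' : (D y).leader = true := hy
            by_contra hyu
            have hyv : y ≠ v := by
              intro hyv; rw [hyv] at hy'; rw [hDv, hp] at hy'
              simp at hy'
            rw [hDw y hyu hyv] at hy'
            have h0 : (C y).cnt = 0 :=
              Finset.sum_eq_zero_iff.mp hT y
                (Finset.mem_erase.2 ⟨hyv, Finset.mem_erase.2 ⟨hyu, Finset.mem_univ y⟩⟩)
            have := hl y hy'
            omega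
        · rw [key Fc, key Gc, hDu, hDv, hp]
          have hF0 : (∑ w ∈ (Finset.univ.erase u).erase v, Fc (C w)) = 0 :=
            Finset.sum_eq_zero fun w _ => by simp [Fc, hph w]
          have hG0 : (∑ w ∈ (Finset.univ.erase u).erase v, Gc (C w)) = 0 :=
            Finset.sum_eq_zero fun w _ => by simp [Gc, hph w]
          have e1 : Fc (⟨true, 2, (C u).mode, 0⟩ : StW) = 0 := by simp [Fc]
          have e2 : Gc (⟨true, 2, (C u).mode, 0⟩ : StW) = 0 := by simp [Gc]
          have e3 : Fc (⟨false, (C v).phase, (C v).mode, 0⟩ : StW) = 0 := by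
            simp [Fc, hph v]
          have e4 : Gc (⟨false, (C v).phase, (C v).mode, 0⟩ : StW) = 0 := by
            simp [Gc, hph v]
          rw [e1, e2, e3, e4, hF0, hG0]
        · rintro ⟨w, hw⟩
          exfalso
          by_cases hwu : w = u
          · rw [hwu] at hw; rw [hDu, hp] at hw; simp at hw
          by_cases hwv : w = v
          · rw [hwv] at hw; rw [hDv, hp] at hw; simp [hph v] at hw
          · rw [hDw w hwu hwv] at hw
            have := hph w
            omega
      · have hp : ciwPair n (C u) (C v) =
            (⟨true, (C u).phase, (C u).mode, min n ((C u).cnt + (C v).cnt)⟩,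
             ⟨false, (C v).phase, (C v).mode, 0⟩) := by
          simp only [ciwPair]
          rw [if_pos h1, if_neg hc]
        have hmin : min n ((C u).cnt + (C v).cnt) = (C u).cnt + (C v).cnt :=
          min_eq_right hab_le
        refine Or.inl ⟨?_, ?_, ?_, ?_⟩
        · intro w
          by_cases hwu : w = u
          · rw [hwu, hDu, hp]; exact hph u
          by_cases hwv : w = v
          · rw [hwv, hDv, hp]; exact hph v
          · rw [hDw w hwu hwv]; exact hph w
        · intro w hw
          by_cases hwu : w = u
          · rw [hwu, hDu, hp]
            have := hl u h1.1
            show 1 ≤ min n ((C u).cnt + (C v).cnt)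
            omega
          by_cases hwv : w = v
          · rw [hwv] at hw; rw [hDv, hp] at hw; simp at hw
          · rw [hDw w hwu hwv] at hw ⊢; exact hl w hw
        · intro w hw
          by_cases hwu : w = u
          · rw [hwu] at hw; rw [hDu, hp] at hw; simp at hw
          by_cases hwv : w = v
          · rw [hwv, hDv, hp]
          · rw [hDw w hwu hwv] at hw ⊢; exact hf w hw
        · rw [key (fun q => q.cnt), hDu, hDv, hp]
          have hsplit := keyC (fun q => q.cnt)
          rw [hs] at hsplit
          show min n ((C u).cnt + (C v).cnt) + 0 + _ = n
          omega
    · -- case B : two distinct leaders impossible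
      exfalso
      obtain ⟨l, -, hl2⟩ := hul
      exact huv ((hl2 u h1.1).trans (hl2 v h1.2).symm)
  · by_cases h2 : (C u).leader = true ∧ (C u).phase = 2 ∧ (C u).mode = (C v).mode
    · -- (R2)
      rcases h with ⟨hph, -, -, -⟩ | ⟨hul, hFG, h4⟩
      · exfalso
        have := hph u
        have := h2.2.1
        omega
      have hno4C : ¬ ∃ w, (C w).phase = 4 := by
        intro hx
        have := h4 hx u
        have := h2.2.1
        omega
      have hld : ∀ a' b' : StW, ciwPair n (C u) (C v) = (a', b') →
          a'.leader = true → b'.leader = (C v).leader → True := fun _ _ _ _ _ => trivial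
      by_cases hcc : min n ((C u).cnt + 1) = n - 1
      · have hp : ciwPair n (C u) (C v) =
            (⟨true, 3, !(C u).mode, 1⟩,
             ⟨(C v).leader, (C v).phase, !(C v).mode, (C v).cnt⟩) := by
          simp only [ciwPair]
          rw [if_neg h1, if_pos h2, if_pos hcc]
        refine Or.inr ⟨eu_congr ?_ hul, ?_, ?_⟩
        · intro w
          by_cases hwu : w = u
          · rw [hwu, hDu, hp]; exact h2.1.symm
          by_cases hwv : w = v
          · rw [hwv, hDv, hp]
          · rw [hDw w hwu hwv]
        · rw [key Fc, key Gc, hDu, hDv, hp]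
          rw [keyC Fc, keyC Gc] at hFG
          have e1 : Fc (C u) = 0 := by simp [Fc, h2.2.1]
          have e2 : Gc (C u) = 0 := by simp [Gc, h2.2.1]
          have e3 : Fc (⟨(C v).leader, (C v).phase, !(C v).mode, (C v).cnt⟩ : StW)
              = Fc (C v) := by simp [Fc]
          have e4 : Gc (⟨(C v).leader, (C v).phase, !(C v).mode, (C v).cnt⟩ : StW)
              = Gc (C v) := by simp [Gc]
          have e5 : Fc (⟨true, 3, !(C u).mode, 1⟩ : StW) = 1 := by simp [Fc]
          have e6 : Gc (⟨true, 3, !(C u).mode, 1⟩ : StW) = 1 := by simp [Gc]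
          rw [e3, e4, e5, e6]
          omega
        · rintro ⟨w, hw⟩
          exfalso
          apply hno4C
          by_cases hwu : w = u
          · rw [hwu] at hw; rw [hDu, hp] at hw; simp at hw
          by_cases hwv : w = v
          · rw [hwv] at hw; rw [hDv, hp] at hw; exact ⟨v, hw⟩
          · rw [hDw w hwu hwv] at hw; exact ⟨w, hw⟩
      · have hp : ciwPair n (C u) (C v) =
            (⟨true, (C u).phase, (C u).mode, min n ((C u).cnt + 1)⟩,
             ⟨(C v).leader, (C v).phase, !(C v).mode, (C v).cnt⟩) := by
          simp only [ciwPair]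
          rw [if_neg h1, if_pos h2, if_neg hcc]
        refine Or.inr ⟨eu_congr ?_ hul, ?_, ?_⟩
        · intro w
          by_cases hwu : w = u
          · rw [hwu, hDu, hp]; exact h2.1.symm
          by_cases hwv : w = v
          · rw [hwv, hDv, hp]
          · rw [hDw w hwu hwv]
        · rw [key Fc, key Gc, hDu, hDv, hp]
          rw [keyC Fc, keyC Gc] at hFG
          have e1 : Fc (C u) = 0 := by simp [Fc, h2.2.1]
          have e2 : Gc (C u) = 0 := by simp [Gc, h2.2.1]
          have e3 : Fc (⟨(C v).leader, (C v).phase, !(C v).mode, (C v).cnt⟩ : StW)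
              = Fc (C v) := by simp [Fc]
          have e4 : Gc (⟨(C v).leader, (C v).phase, !(C v).mode, (C v).cnt⟩ : StW)
              = Gc (C v) := by simp [Gc]
          have e5 : Fc (⟨true, (C u).phase, (C u).mode, min n ((C u).cnt + 1)⟩ : StW)
              = 0 := by simp [Fc, h2.2.1]
          have e6 : Gc (⟨true, (C u).phase, (C u).mode, min n ((C u).cnt + 1)⟩ : StW)
              = 0 := by simp [Gc, h2.2.1]
          rw [e3, e4, e5, e6]
          omega
        · rintro ⟨w, hw⟩
          exfalso
          apply hno4C
          by_cases hwu : w = u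
          · rw [hwu] at hw; rw [hDu, hp] at hw
            exact absurd (show (C u).phase = 4 from hw) (by have := h2.2.1; omega)
          by_cases hwv : w = v
          · rw [hwv] at hw; rw [hDv, hp] at hw; exact ⟨v, hw⟩
          · rw [hDw w hwu hwv] at hw; exact ⟨w, hw⟩
    · by_cases h3 : (C u).leader = true ∧ (C u).phase = 3 ∧ (C v).phase = 1
      · -- (R3)
        rcases h with ⟨hph, -, -, -⟩ | ⟨hul, hFG, h4⟩
        · exfalso
          have := hph u
          have := h3.2.1
          omega
        have hno4C : ¬ ∃ w, (C w).phase = 4 := by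
          intro hx
          have := h4 hx v
          have := h3.2.2
          omega
        have hp : ciwPair n (C u) (C v) =
            (⟨false, (C u).phase, (C u).mode, (C u).cnt⟩,
             ⟨true, 2, (C v).mode, (C v).cnt⟩) := by
          simp only [ciwPair]
          rw [if_neg h1, if_neg h2, if_pos h3]
        obtain ⟨l, hl1, hl2⟩ := hul
        have hlu : l = u := (hl2 u h3.1).symm
        refine Or.inr ⟨?_, ?_, ?_⟩
        · refine ⟨v, ?_, ?_⟩
          · show (D v).leader = true
            rw [hDv, hp]
          · intro y hy
            have hy' : (D y).leader = true := hy
            by_contra hyv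
            by_cases hyu : y = u
            · rw [hyu] at hy'; rw [hDu, hp] at hy'; simp at hy'
            · rw [hDw y hyu hyv] at hy'
              exact hyu ((hl2 y hy').trans hlu)
        · rw [key Fc, key Gc, hDu, hDv, hp]
          rw [keyC Fc, keyC Gc] at hFG
          have e1 : Fc (⟨false, (C u).phase, (C u).mode, (C u).cnt⟩ : StW)
              = Fc (C u) := by simp [Fc]
          have e2 : Gc (⟨false, (C u).phase, (C u).mode, (C u).cnt⟩ : StW)
              = Gc (C u) := by simp [Gc]
          have e3 : Fc (⟨true, 2, (C v).mode, (C v).cnt⟩ : StW) = 0 := by simp [Fc]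
          have e4 : Gc (⟨true, 2, (C v).mode, (C v).cnt⟩ : StW) = 0 := by simp [Gc]
          have e5 : Fc (C v) = 0 := by simp [Fc, h3.2.2]
          have e6 : Gc (C v) = 0 := by simp [Gc, h3.2.2]
          rw [e1, e2, e3, e4]
          omega
        · rintro ⟨w, hw⟩
          exfalso
          apply hno4C
          by_cases hwu : w = u
          · rw [hwu] at hw; rw [hDu, hp] at hw
            exact ⟨u, hw⟩
          by_cases hwv : w = v
          · rw [hwv] at hw; rw [hDv, hp] at hw; simp at hw
          · rw [hDw w hwu hwv] at hw; exact ⟨w, hw⟩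
      · by_cases h4r : (C u).phase = 3 ∧ (C v).phase = 3 ∧ 0 < (C u).cnt ∧ 0 < (C v).cnt
        · -- (R4)
          rcases h with ⟨hph, -, -, -⟩ | ⟨hul, hFG, h4⟩
          · exfalso
            have := hph u
            have := h4r.1
            omega
          have eFu : Fc (C u) = (C u).cnt := by simp [Fc, h4r.1]
          have eFv : Fc (C v) = (C v).cnt := by simp [Fc, h4r.2.1]
          have eGu : Gc (C u) = 1 := by simp [Gc, h4r.1]
          have eGv : Gc (C v) = 1 := by simp [Gc, h4r.2.1]
          have hGle : (∑ w, Gc (C w)) ≤ n := by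
            calc (∑ w, Gc (C w)) ≤ ∑ _w : W, 1 :=
                  Finset.sum_le_sum fun i _ => Gc_le_one (C i)
            _ = Fintype.card W := by simp
            _ = n := hV
          have hsplitF := keyC Fc
          have hsplitG := keyC Gc
          have hab_le : (C u).cnt + (C v).cnt ≤ n := by
            rw [hFG] at hsplitF
            omega
          have hmin : min n ((C u).cnt + (C v).cnt) = (C u).cnt + (C v).cnt :=
            min_eq_right hab_le
          by_cases hc : min n ((C u).cnt + (C v).cnt) = n
          · have hp : ciwPair n (C u) (C v) =
                (⟨(C u).leader, 4, (C u).mode, min n ((C u).cnt + (C v).cnt)⟩,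
                 ⟨(C v).leader, (C v).phase, (C v).mode, 0⟩) := by
              simp only [ciwPair]
              rw [if_neg h1, if_neg h2, if_neg h3, if_pos h4r, if_pos hc]
            have hall : ∀ w, (C w).phase = 3 ∨ (C w).phase = 4 := by
              have hGn : (∑ w, Gc (C w)) = n := by omega
              have hcard : (∑ w, Gc (C w)) = ∑ _w : W, 1 := by
                rw [hGn, ← hV]; simp
              have heach := (Finset.sum_eq_sum_iff_of_le
                  (fun i (_ : i ∈ Finset.univ) => Gc_le_one (C i))).mp hcard
              intro w
              have hone : Gc (C w) = 1 := heach w (Finset.mem_univ w)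
              by_contra hcon
              push_neg at hcon
              simp [Gc, hcon.1, hcon.2] at hone
            refine Or.inr ⟨eu_congr ?_ hul, ?_, ?_⟩
            · intro w
              by_cases hwu : w = u
              · rw [hwu, hDu, hp]
              by_cases hwv : w = v
              · rw [hwv, hDv, hp]
              · rw [hDw w hwu hwv]
            · rw [key Fc, key Gc, hDu, hDv, hp]
              rw [keyC Fc, keyC Gc] at hFG
              have e1 : Fc (⟨(C u).leader, 4, (C u).mode,
                  min n ((C u).cnt + (C v).cnt)⟩ : StW)
                  = (C u).cnt + (C v).cnt := by simp [Fc, hmin]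
              have e2 : Gc (⟨(C u).leader, 4, (C u).mode,
                  min n ((C u).cnt + (C v).cnt)⟩ : StW) = 1 := by simp [Gc]
              have e3 : Fc (⟨(C v).leader, (C v).phase, (C v).mode, 0⟩ : StW)
                  = 0 := by simp [Fc, h4r.2.1]
              have e4 : Gc (⟨(C v).leader, (C v).phase, (C v).mode, 0⟩ : StW)
                  = 1 := by simp [Gc, h4r.2.1]
              rw [e1, e2, e3, e4]
              omega
            · intro _
              intro w
              by_cases hwu : w = u
              · rw [hwu, hDu, hp]; right; rfl
              by_cases hwv : w = v
              · rw [hwv, hDv, hp]; left; exact h4r.2.1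
              · rw [hDw w hwu hwv]; exact hall w
          · have hp : ciwPair n (C u) (C v) =
                (⟨(C u).leader, (C u).phase, (C u).mode, min n ((C u).cnt + (C v).cnt)⟩,
                 ⟨(C v).leader, (C v).phase, (C v).mode, 0⟩) := by
              simp only [ciwPair]
              rw [if_neg h1, if_neg h2, if_neg h3, if_pos h4r, if_neg hc]
            refine Or.inr ⟨eu_congr ?_ hul, ?_, ?_⟩
            · intro w
              by_cases hwu : w = u
              · rw [hwu, hDu, hp]
              by_cases hwv : w = v
              · rw [hwv, hDv, hp]
              · rw [hDw w hwu hwv]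
            · rw [key Fc, key Gc, hDu, hDv, hp]
              rw [keyC Fc, keyC Gc] at hFG
              have e1 : Fc (⟨(C u).leader, (C u).phase, (C u).mode,
                  min n ((C u).cnt + (C v).cnt)⟩ : StW)
                  = (C u).cnt + (C v).cnt := by simp [Fc, hmin, h4r.1]
              have e2 : Gc (⟨(C u).leader, (C u).phase, (C u).mode,
                  min n ((C u).cnt + (C v).cnt)⟩ : StW) = 1 := by simp [Gc, h4r.1]
              have e3 : Fc (⟨(C v).leader, (C v).phase, (C v).mode, 0⟩ : StW)
                  = 0 := by simp [Fc, h4r.2.1]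
              have e4 : Gc (⟨(C v).leader, (C v).phase, (C v).mode, 0⟩ : StW)
                  = 1 := by simp [Gc, h4r.2.1]
              rw [e1, e2, e3, e4]
              omega
            · intro hx
              have hallC : ∀ w, (C w).phase = 3 ∨ (C w).phase = 4 := by
                apply h4
                obtain ⟨w, hw⟩ := hx
                by_cases hwu : w = u
                · rw [hwu] at hw; rw [hDu, hp] at hw
                  exfalso
                  have := h4r.1
                  simp only at hw
                  omega
                by_cases hwv : w = v
                · rw [hwv] at hw; rw [hDv, hp] at hw
                  exfalso
                  have := h4r.2.1
                  simp only at hw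
                  omega
                · rw [hDw w hwu hwv] at hw; exact ⟨w, hw⟩
              intro w
              by_cases hwu : w = u
              · rw [hwu, hDu, hp]; left; exact h4r.1
              by_cases hwv : w = v
              · rw [hwv, hDv, hp]; left; exact h4r.2.1
              · rw [hDw w hwu hwv]; exact hallC w
        · by_cases h5 : (C u).phase = 4
          · -- (R5)
            rcases h with ⟨hph, -, -, -⟩ | ⟨hul, hFG, h4⟩
            · exfalso
              have := hph u
              omega
            have hallC : ∀ w, (C w).phase = 3 ∨ (C w).phase = 4 := h4 ⟨u, h5⟩
            have hp : ciwPair n (C u) (C v) =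
                (C u, ⟨(C v).leader, 4, (C v).mode, (C v).cnt⟩) := by
              simp only [ciwPair]
              rw [if_neg h1, if_neg h2, if_neg h3, if_neg h4r, if_pos h5]
            refine Or.inr ⟨eu_congr ?_ hul, ?_, ?_⟩
            · intro w
              by_cases hwu : w = u
              · rw [hwu, hDu, hp]
              by_cases hwv : w = v
              · rw [hwv, hDv, hp]
              · rw [hDw w hwu hwv]
            · rw [key Fc, key Gc, hDu, hDv, hp]
              rw [keyC Fc, keyC Gc] at hFG
              have e3 : Fc (⟨(C v).leader, 4, (C v).mode, (C v).cnt⟩ : StW)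
                  = (C v).cnt := by simp [Fc]
              have e4 : Gc (⟨(C v).leader, 4, (C v).mode, (C v).cnt⟩ : StW)
                  = 1 := by simp [Gc]
              have e5 : Fc (C v) = (C v).cnt := by
                have := hallC v
                unfold Fc
                rw [if_pos this]
              have e6 : Gc (C v) = 1 := by
                have := hallC v
                unfold Gc
                rw [if_pos this]
              have r1 : ((C u, (⟨(C v).leader, 4, (C v).mode, (C v).cnt⟩ : StW))).1
                  = C u := rfl
              have r2 : ((C u, (⟨(C v).leader, 4, (C v).mode, (C v).cnt⟩ : StW))).2
                  = (⟨(C v).leader, 4, (C v).mode, (C v).cnt⟩ : StW) := rfl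
              rw [r1, r2, e3, e4]
              omega
            · intro _
              intro w
              by_cases hwu : w = u
              · rw [hwu, hDu, hp]; exact hallC u
              by_cases hwv : w = v
              · rw [hwv, hDv, hp]; right; rfl
              · rw [hDw w hwu hwv]; exact hallC w
          · -- no rule applies
            have hp : ciwPair n (C u) (C v) = (C u, C v) := by
              simp only [ciwPair]
              rw [if_neg h1, if_neg h2, if_neg h3, if_neg h4r, if_neg h5]
            have hDC : D = C := by
              funext w
              by_cases hwu : w = u
              · rw [hwu, hDu, hp]
              by_cases hwv : w = v
              · rw [hwv, hDv, hp]
              · exact hDw w hwu hwv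
            rwa [hDC]

theorem statement7 (n : ℕ) (hn : 2 ≤ n) (V : Type) [Fintype V]
    (hV : Fintype.card V = n) (E : V × V → Prop) (hG : IsCommGraph E) :
    ∀ C : V → StW, Reach (ciwδ n) E (fun _ => initW) C →
      (∑ a ∈ Finset.univ.filter (fun a : V => (C a).phase = 3 ∨ (C a).phase = 4),
          (C a).cnt)
        = (Finset.univ.filter (fun a : V => (C a).phase = 3 ∨ (C a).phase = 4)).card := by
  intro C hreach
  have hInv : Inv n C := by
    induction hreach with
    | refl =>
      refine Or.inl ⟨fun w => rfl, fun w _ => le_refl 1, fun w hw => absurd rfl hw, ?_⟩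
      simp [initW, hV]
    | @tail B C' hr hstep ih =>
      obtain ⟨e, hE, rfl⟩ := hstep
      obtain ⟨x, y⟩ := e
      have hxy : x ≠ y := by
        intro hq
        exact hG.1 y (hq ▸ hE)
      exact inv_step_s7 hV hxy ih
  rcases hInv with ⟨hph, -, -, -⟩ | ⟨-, hFG, -⟩
  · have hemp : (Finset.univ.filter
        (fun a : V => (C a).phase = 3 ∨ (C a).phase = 4)) = ∅ :=
      Finset.filter_eq_empty_iff.2 fun {x} _ hx => by
        have := hph x
        omega
    rw [hemp]
    simp
  · rw [Finset.sum_filter, Finset.card_filter]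
    have h1 : (∑ a : V, if (C a).phase = 3 ∨ (C a).phase = 4 then (C a).cnt else 0)
        = ∑ a : V, Fc (C a) := rfl
    have h2 : (∑ a : V, if (C a).phase = 3 ∨ (C a).phase = 4 then 1 else 0)
        = ∑ a : V, Gc (C a) := rfl
    rw [h1, h2, hFG]

end

end CGI
end

section
/- Fix n ≥ 2 and let G=(V,E) be a communication graph with n vertices that is NOT complete. Then in every configuration reachable from the initial configuration under the protocol CIW_n, no agent has phase 4; consequently the initial configuration is stable and every agent outputs no in every configuration of every execution of CIW_n on G. -/
/-!
Population protocols: framework and the protocol `CIW_n`.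

STATEMENT 7: In every configuration `C` reachable from the initial configuration
under the protocol `CIW_n` on a communication graph with `n` vertices, the sum of
`cnt` over all agents whose phase is 3 or 4 equals the number of such agents.
-/

namespace CGI

attribute [local instance] Classical.propDecidable

noncomputable section

variable {V Q : Type*}

/-- Output of `CIW_n`: an agent outputs `yes` (`true`) iff its phase is 4. -/
def outW (q : StW) : Bool := q.phase == 4

set_option linter.unusedSectionVars false

/-! ### Auxiliary development for the proof -/

section Auxiliary

open Finset

variable [Fintype V] [DecidableEq V]

lemma stepFn_eq_update (δ : StW × StW → StW × StW) (C : V → StW) (a b : V) (hab : a ≠ b) :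
    stepFn δ C (a, b) =
      Function.update (Function.update C a (δ (C a, C b)).1) b (δ (C a, C b)).2 := by
  funext x
  rcases eq_or_ne x a with rfl | hxa
  · simp [stepFn, Function.update_of_ne hab, Function.update_self]
  · rcases eq_or_ne x b with rfl | hxb
    · simp [stepFn, Function.update_self, hxa]
    · simp [stepFn, Function.update_of_ne hxa, Function.update_of_ne hxb, hxa, hxb]

lemma stepFn_eq_self (δ : StW × StW → StW × StW) (C : V → StW) (a b : V)
    (h : δ (C a, C b) = (C a, C b)) : stepFn δ C (a, b) = C := by
  funext x
  simp only [stepFn, h]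
  split_ifs with h1 h2
  · rw [h1]
  · rw [h2]
  · rfl

lemma upd2_a {C : V → StW} {a b : V} (hab : a ≠ b) (qa qb : StW) :
    Function.update (Function.update C a qa) b qb a = qa := by
  rw [Function.update_of_ne hab, Function.update_self]

lemma upd2_b {C : V → StW} {a b : V} (qa qb : StW) :
    Function.update (Function.update C a qa) b qb b = qb := Function.update_self ..

lemma upd2_o {C : V → StW} {a b x : V} (hxa : x ≠ a) (hxb : x ≠ b) (qa qb : StW) :
    Function.update (Function.update C a qa) b qb x = C x := by
  rw [Function.update_of_ne hxb, Function.update_of_ne hxa]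

lemma sum_upd2 {a b : V} (hab : a ≠ b) (C : V → StW) (qa qb : StW) (F : V → StW → ℕ) :
    (∑ x, F x (Function.update (Function.update C a qa) b qb x)) + (F a (C a) + F b (C b))
      = (∑ x, F x (C x)) + (F a qa + F b qb) := by
  have h1 : ∀ x, F x (Function.update (Function.update C a qa) b qb x)
      = Function.update (Function.update (fun y => F y (C y)) a (F a qa)) b (F b qb) x := by
    intro x
    rcases eq_or_ne x b with rfl | hxb
    · simp [Function.update_apply]
    · rcases eq_or_ne x a with rfl | hxa
      · simp [Function.update_apply, hxb, hab]
      · simp [Function.update_apply, hxa, hxb]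
  have hamem : a ∈ univ \ {b} := Finset.mem_sdiff.mpr ⟨Finset.mem_univ a,
    fun h => hab (Finset.mem_singleton.mp h)⟩
  rw [Finset.sum_congr rfl (fun x _ => h1 x)]
  rw [Finset.sum_update_of_mem (Finset.mem_univ b)]
  rw [Finset.sum_update_of_mem hamem]
  have e1 := Finset.sum_eq_sum_sdiff_singleton_add (Finset.mem_univ b) (fun x => F x (C x))
  have e2 := Finset.sum_eq_sum_sdiff_singleton_add hamem (fun x => F x (C x))
  omega

lemma sum_split2 (f : V → ℕ) {a b : V} (hab : a ≠ b) :
    ∑ x, f x = f a + f b + ∑ x ∈ (univ \ {b}) \ {a}, f x := by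
  have hamem : a ∈ univ \ {b} := Finset.mem_sdiff.mpr ⟨Finset.mem_univ a,
    fun h => hab (Finset.mem_singleton.mp h)⟩
  have e1 := Finset.sum_eq_sum_sdiff_singleton_add (Finset.mem_univ b) f
  have e2 := Finset.sum_eq_sum_sdiff_singleton_add hamem f
  omega

lemma sum_le_card_sub_one {f : V → ℕ} (hf : ∀ x, f x ≤ 1) {p : V} (hp : f p = 0) :
    ∑ x, f x + 1 ≤ Fintype.card V := by
  have h1 : ∑ x, f x = ∑ x ∈ univ.erase p, f x := (Finset.sum_erase _ hp).symm
  have h2 : ∑ x ∈ univ.erase p, f x ≤ (univ.erase p).card * 1 :=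
    Finset.sum_le_card_nsmul _ _ 1 (fun x _ => hf x)
  have h3 : (univ.erase p).card = Fintype.card V - 1 := by
    rw [Finset.card_erase_of_mem (Finset.mem_univ p), Finset.card_univ]
  have h4 : 0 < Fintype.card V := Fintype.card_pos_iff.mpr ⟨p⟩
  omega

lemma sum_le_card_sub_two {f : V → ℕ} (hf : ∀ x, f x ≤ 1) {p q : V} (hpq : p ≠ q)
    (hp : f p = 0) (hq : f q = 0) : ∑ x, f x + 2 ≤ Fintype.card V := by
  have h1 : ∑ x, f x = ∑ x ∈ univ.erase q, f x := (Finset.sum_erase _ hq).symm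
  have h1' : ∑ x ∈ univ.erase q, f x = ∑ x ∈ (univ.erase q).erase p, f x :=
    (Finset.sum_erase _ hp).symm
  have h2 : ∑ x ∈ (univ.erase q).erase p, f x ≤ ((univ.erase q).erase p).card * 1 :=
    Finset.sum_le_card_nsmul _ _ 1 (fun x _ => hf x)
  have h3 : ((univ.erase q).erase p).card = Fintype.card V - 1 - 1 := by
    rw [Finset.card_erase_of_mem (Finset.mem_erase.mpr ⟨hpq, Finset.mem_univ p⟩),
      Finset.card_erase_of_mem (Finset.mem_univ q), Finset.card_univ]
  have h4 : 1 < Fintype.card V := Fintype.one_lt_card_iff.mpr ⟨p, q, hpq⟩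
  omega
/-- `cnt` contribution of a phase-3 state. -/
def p3c (q : StW) : ℕ := if q.phase = 3 then q.cnt else 0

/-- Indicator of a phase-3 state. -/
def p3n (q : StW) : ℕ := if q.phase = 3 then 1 else 0

/-- Indicator: agent `x` (≠ `v`) whose mode differs from `m` ("already counted"). -/
def bd (m : Bool) (v x : V) (q : StW) : ℕ := if x ≠ v ∧ q.mode ≠ m then 1 else 0

/-- Indicator: agent `x` (≠ `v`) whose mode equals `m` ("not yet counted"). -/
def gd (m : Bool) (v x : V) (q : StW) : ℕ := if x ≠ v ∧ q.mode = m then 1 else 0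

lemma p3c_le (q : StW) : p3c q ≤ q.cnt := by unfold p3c; split <;> omega

lemma p3n_le (q : StW) : p3n q ≤ 1 := by unfold p3n; split <;> omega

lemma bd_le (m : Bool) (v x : V) (q : StW) : bd m v x q ≤ 1 := by unfold bd; split <;> omega

lemma bd_of_eq {m : Bool} (v x : V) {q : StW} (h : q.mode = m) : bd m v x q = 0 := by
  unfold bd; rw [if_neg]; rintro ⟨-, h2⟩; exact h2 h

lemma bd_self (m : Bool) (v : V) (q : StW) : bd m v v q = 0 := by
  unfold bd; rw [if_neg]; rintro ⟨h1, -⟩; exact h1 rfl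

lemma gd_self (m : Bool) (v : V) (q : StW) : gd m v v q = 0 := by
  unfold gd; rw [if_neg]; rintro ⟨h1, -⟩; exact h1 rfl

lemma gd_of_eq {m : Bool} {v x : V} (hx : x ≠ v) {q : StW} (h : q.mode = m) :
    gd m v x q = 1 := by unfold gd; rw [if_pos ⟨hx, h⟩]

lemma sum_bd_gd (m : Bool) (v : V) (C : V → StW) :
    (∑ x, bd m v x (C x)) + (∑ x, gd m v x (C x)) = Fintype.card V - 1 := by
  classical
  have h1 : ∀ x, bd m v x (C x) + gd m v x (C x) = if x = v then 0 else 1 := by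
    intro x
    by_cases hx : x = v
    · subst hx; rw [bd_self, gd_self, if_pos rfl]
    · by_cases hm : (C x).mode = m
      · rw [bd_of_eq _ _ hm, gd_of_eq hx hm, if_neg hx]
      · unfold bd gd
        rw [if_pos ⟨hx, hm⟩, if_neg (fun h => hm h.2), if_neg hx]
  have h2 : ∀ x, (if x = v then (0:ℕ) else 1) + (if x = v then (1:ℕ) else 0) = 1 := by
    intro x; by_cases hx : x = v <;> simp [hx]
  have h3 : (∑ x, if x = v then (0:ℕ) else 1) + (∑ x, if x = v then (1:ℕ) else 0)
      = Fintype.card V := by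
    rw [← Finset.sum_add_distrib, Finset.sum_congr rfl (fun x _ => h2 x)]
    simp [Finset.card_univ]
  have h4 : (∑ x, if x = v then (1:ℕ) else 0) = 1 := by
    rw [Finset.sum_ite_eq' univ v (fun _ => 1), if_pos (Finset.mem_univ v)]
  have h5 : (∑ x, (bd m v x (C x) + gd m v x (C x))) = ∑ x, if x = v then (0:ℕ) else 1 :=
    Finset.sum_congr rfl (fun x _ => h1 x)
  rw [Finset.sum_add_distrib] at h5
  omega

/-! ### Evaluation lemmas for `ciwPair` -/

lemma ciw_nofire (n : ℕ) (a b : StW)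
    (h1 : ¬(a.leader = true ∧ b.leader = true))
    (h2 : ¬(a.leader = true ∧ a.phase = 2 ∧ a.mode = b.mode))
    (h3 : ¬(a.leader = true ∧ a.phase = 3 ∧ b.phase = 1))
    (h4 : ¬(a.phase = 3 ∧ b.phase = 3 ∧ 0 < a.cnt ∧ 0 < b.cnt))
    (h5 : ¬(a.phase = 4)) :
    ciwPair n a b = (a, b) := by
  rw [ciwPair, if_neg h1, if_neg h2, if_neg h3, if_neg h4, if_neg h5]

lemma ciw_R1_hi (n : ℕ) (a b : StW) (h1 : a.leader = true ∧ b.leader = true)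
    (hc : min n (a.cnt + b.cnt) = n) :
    ciwPair n a b = (⟨true, 2, a.mode, 0⟩, ⟨false, b.phase, b.mode, 0⟩) := by
  rw [ciwPair, if_pos h1]; exact if_pos hc

lemma ciw_R1_lo (n : ℕ) (a b : StW) (h1 : a.leader = true ∧ b.leader = true)
    (hc : ¬ min n (a.cnt + b.cnt) = n) :
    ciwPair n a b = (⟨true, a.phase, a.mode, min n (a.cnt + b.cnt)⟩,
      ⟨false, b.phase, b.mode, 0⟩) := by
  rw [ciwPair, if_pos h1]; exact if_neg hc

lemma ciw_R2_hi (n : ℕ) (a b : StW) (h1 : ¬(a.leader = true ∧ b.leader = true))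
    (h2 : a.leader = true ∧ a.phase = 2 ∧ a.mode = b.mode)
    (hc : min n (a.cnt + 1) = n - 1) :
    ciwPair n a b = (⟨true, 3, !a.mode, 1⟩, ⟨b.leader, b.phase, !b.mode, b.cnt⟩) := by
  rw [ciwPair, if_neg h1, if_pos h2]; exact if_pos hc

lemma ciw_R2_lo (n : ℕ) (a b : StW) (h1 : ¬(a.leader = true ∧ b.leader = true))
    (h2 : a.leader = true ∧ a.phase = 2 ∧ a.mode = b.mode)
    (hc : ¬ min n (a.cnt + 1) = n - 1) :
    ciwPair n a b = (⟨true, a.phase, a.mode, min n (a.cnt + 1)⟩,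
      ⟨b.leader, b.phase, !b.mode, b.cnt⟩) := by
  rw [ciwPair, if_neg h1, if_pos h2]; exact if_neg hc

lemma ciw_R3 (n : ℕ) (a b : StW) (h1 : ¬(a.leader = true ∧ b.leader = true))
    (h2 : ¬(a.leader = true ∧ a.phase = 2 ∧ a.mode = b.mode))
    (h3 : a.leader = true ∧ a.phase = 3 ∧ b.phase = 1) :
    ciwPair n a b = (⟨false, a.phase, a.mode, a.cnt⟩, ⟨true, 2, b.mode, b.cnt⟩) := by
  rw [ciwPair, if_neg h1, if_neg h2, if_pos h3]

lemma ciw_R4_lo (n : ℕ) (a b : StW) (h1 : ¬(a.leader = true ∧ b.leader = true))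
    (h2 : ¬(a.leader = true ∧ a.phase = 2 ∧ a.mode = b.mode))
    (h3 : ¬(a.leader = true ∧ a.phase = 3 ∧ b.phase = 1))
    (h4 : a.phase = 3 ∧ b.phase = 3 ∧ 0 < a.cnt ∧ 0 < b.cnt)
    (hc : ¬ min n (a.cnt + b.cnt) = n) :
    ciwPair n a b = (⟨a.leader, a.phase, a.mode, min n (a.cnt + b.cnt)⟩,
      ⟨b.leader, b.phase, b.mode, 0⟩) := by
  rw [ciwPair, if_neg h1, if_neg h2, if_neg h3, if_pos h4]; exact if_neg hc

/-! ### The invariant -/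

/-- Stage A: everyone still in phase 1, gathering tokens. -/
def InvA (n : ℕ) (C : V → StW) : Prop :=
  (∀ x, (C x).phase = 1) ∧ (∀ x, (C x).mode = false) ∧
  (∀ x, (C x).leader = false → (C x).cnt = 0) ∧
  (∀ x, (C x).leader = true → 1 ≤ (C x).cnt) ∧
  (∑ x, (C x).cnt = n)

/-- Stage B: a unique leader `v`; phase-3 counting in progress. -/
def InvB (u w : V) (C : V → StW) : Prop :=
  ∃ v : V,
    (C v).leader = true ∧
    ((C v).phase = 2 ∨ (C v).phase = 3) ∧
    (∀ x, x ≠ v → (C x).leader = false) ∧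
    (∀ x, (C x).phase = 1 ∨ (C x).phase = 2 ∨ (C x).phase = 3) ∧
    (∀ x, (C x).phase = 2 → x = v) ∧
    (∀ x, (C x).phase = 1 → (C x).cnt = 0) ∧
    (∑ x, p3c (C x) = ∑ x, p3n (C x)) ∧
    ((C v).phase = 2 → (C v).cnt = ∑ x, bd ((C v).mode) v x (C x)) ∧
    ((C v).phase = 3 → ∀ x, (C x).mode = (C v).mode) ∧
    (C u).phase ≠ 3 ∧
    ((C u).phase = 2 → (C w).mode = (C u).mode)
lemma p3c_zero {q : StW} (h : q.phase ≠ 3) : p3c q = 0 := if_neg h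
lemma p3n_zero {q : StW} (h : q.phase ≠ 3) : p3n q = 0 := if_neg h
lemma p3c_three {q : StW} (h : q.phase = 3) : p3c q = q.cnt := if_pos h
lemma p3n_three {q : StW} (h : q.phase = 3) : p3n q = 1 := if_pos h

lemma bool_true {b : Bool} (h : ¬ b = false) : b = true := by
  cases b
  · exact absurd rfl h
  · rfl

lemma bool_false {b : Bool} (h : ¬ b = true) : b = false := by
  cases b
  · rfl
  · exact absurd rfl h

lemma bool_neq {x m : Bool} (h : ¬ x = m) : x = !m := by
  cases m <;> cases x <;> simp_all

lemma bool_notne (m : Bool) : ¬ (!m) = m := by cases m <;> simp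

lemma inv_step_s9 (n : ℕ) (hn : 2 ≤ n) (hV : Fintype.card V = n) (u w : V) (huw : u ≠ w)
    (C : V → StW) (a b : V) (hab : a ≠ b) (hmiss : ¬(a = u ∧ b = w))
    (h : InvA n C ∨ InvB u w C) :
    InvA n (stepFn (ciwδ n) C (a, b)) ∨ InvB u w (stepFn (ciwδ n) C (a, b)) := by
  have hδ : ciwδ n (C a, C b) = ciwPair n (C a) (C b) := rfl
  rcases h with ⟨hp, hm, hf, hl, hs⟩ |
    ⟨v, hvl, hvp, hlead, hph, hp2, hp1c, hsum3, hbd3, hmode3, hu3, hu2⟩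
  -- ===================== Stage A =====================
  · by_cases hg1 : (C a).leader = true ∧ (C b).leader = true
    · by_cases hc : min n ((C a).cnt + (C b).cnt) = n
      · -- R1, promotion: move to stage B with unique leader a
        have h1 : (ciwδ n (C a, C b)).1 = (⟨true, 2, (C a).mode, 0⟩ : StW) := by
          rw [hδ, ciw_R1_hi n _ _ hg1 hc]
        have h2 : (ciwδ n (C a, C b)).2 = (⟨false, (C b).phase, (C b).mode, 0⟩ : StW) := by
          rw [hδ, ciw_R1_hi n _ _ hg1 hc]
        rw [stepFn_eq_update _ _ _ _ hab, h1, h2]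
        have hge : n ≤ (C a).cnt + (C b).cnt := by omega
        have hsplit := sum_split2 (fun x => (C x).cnt) hab
        have hrest0 : ∑ x ∈ (univ \ {b}) \ {a}, (C x).cnt = 0 := by omega
        have hzero : ∀ x, x ≠ a → x ≠ b → (C x).cnt = 0 := by
          intro x hxa hxb
          refine Finset.sum_eq_zero_iff.mp hrest0 x ?_
          simp [Finset.mem_sdiff, hxa, hxb]
        have hfoll : ∀ x, x ≠ a → x ≠ b → (C x).leader = false := by
          intro x hxa hxb
          by_contra hld
          have := hl x (bool_true hld)
          rw [hzero x hxa hxb] at this; omega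
        refine Or.inr ⟨a, ?_, ?_, ?_, ?_, ?_, ?_, ?_, ?_, ?_, ?_, ?_⟩
        · rw [upd2_a hab]
        · left; rw [upd2_a hab]
        · intro x hxa
          rcases eq_or_ne x b with rfl | hxb
          · rw [upd2_b]
          · rw [upd2_o hxa hxb]; exact hfoll x hxa hxb
        · intro x
          rcases eq_or_ne x a with rfl | hxa
          · right; left; rw [upd2_a hab]
          · rcases eq_or_ne x b with rfl | hxb
            · left; rw [upd2_b]; exact hp x
            · left; rw [upd2_o hxa hxb]; exact hp x
        · intro x hx
          by_contra hxa
          rcases eq_or_ne x b with rfl | hxb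
          · rw [upd2_b] at hx; dsimp only at hx; rw [hp x] at hx; omega
          · rw [upd2_o hxa hxb] at hx; rw [hp x] at hx; omega
        · intro x hx
          rcases eq_or_ne x a with rfl | hxa
          · rw [upd2_a hab] at hx; dsimp only at hx; omega
          · rcases eq_or_ne x b with rfl | hxb
            · rw [upd2_b]
            · rw [upd2_o hxa hxb]; exact hzero x hxa hxb
        · have hz : ∀ x, p3c (Function.update (Function.update C a
              (⟨true, 2, (C a).mode, 0⟩ : StW)) b (⟨false, (C b).phase, (C b).mode, 0⟩ : StW) x)
              = 0 := by
            intro x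
            rcases eq_or_ne x a with rfl | hxa
            · rw [upd2_a hab]; exact p3c_zero (by dsimp only; omega)
            · rcases eq_or_ne x b with rfl | hxb
              · rw [upd2_b]; exact p3c_zero (by dsimp only; rw [hp x]; omega)
              · rw [upd2_o hxa hxb]; exact p3c_zero (by rw [hp x]; omega)
          have hz' : ∀ x, p3n (Function.update (Function.update C a
              (⟨true, 2, (C a).mode, 0⟩ : StW)) b (⟨false, (C b).phase, (C b).mode, 0⟩ : StW) x)
              = 0 := by
            intro x
            rcases eq_or_ne x a with rfl | hxa
            · rw [upd2_a hab]; exact p3n_zero (by dsimp only; omega)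
            · rcases eq_or_ne x b with rfl | hxb
              · rw [upd2_b]; exact p3n_zero (by dsimp only; rw [hp x]; omega)
              · rw [upd2_o hxa hxb]; exact p3n_zero (by rw [hp x]; omega)
          rw [Finset.sum_eq_zero (fun x _ => hz x), Finset.sum_eq_zero (fun x _ => hz' x)]
        · intro _
          rw [upd2_a hab]
          refine Eq.symm (Finset.sum_eq_zero fun x _ => ?_)
          apply bd_of_eq
          dsimp only
          rcases eq_or_ne x a with rfl | hxa
          · rw [upd2_a hab]
          · rcases eq_or_ne x b with rfl | hxb
            · rw [upd2_b]; dsimp only; rw [hm x, hm a]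
            · rw [upd2_o hxa hxb, hm x, hm a]
        · intro hx
          rw [upd2_a hab] at hx; dsimp only at hx; omega
        · rcases eq_or_ne u a with rfl | hua
          · rw [upd2_a hab]; dsimp only; omega
          · rcases eq_or_ne u b with rfl | hub
            · rw [upd2_b]; dsimp only; rw [hp u]; omega
            · rw [upd2_o hua hub]; rw [hp u]; omega
        · intro _
          have hwm : (Function.update (Function.update C a
              (⟨true, 2, (C a).mode, 0⟩ : StW)) b (⟨false, (C b).phase, (C b).mode, 0⟩ : StW)
              w).mode = false := by
            rcases eq_or_ne w a with rfl | hwa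
            · rw [upd2_a hab]; dsimp only; exact hm w
            · rcases eq_or_ne w b with rfl | hwb
              · rw [upd2_b]; dsimp only; exact hm w
              · rw [upd2_o hwa hwb]; exact hm w
          have hum : (Function.update (Function.update C a
              (⟨true, 2, (C a).mode, 0⟩ : StW)) b (⟨false, (C b).phase, (C b).mode, 0⟩ : StW)
              u).mode = false := by
            rcases eq_or_ne u a with rfl | hua
            · rw [upd2_a hab]; dsimp only; exact hm u
            · rcases eq_or_ne u b with rfl | hub
              · rw [upd2_b]; dsimp only; exact hm u
              · rw [upd2_o hua hub]; exact hm u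
          rw [hwm, hum]
      · -- R1, no promotion: stay in stage A
        have h1 : (ciwδ n (C a, C b)).1
            = (⟨true, (C a).phase, (C a).mode, min n ((C a).cnt + (C b).cnt)⟩ : StW) := by
          rw [hδ, ciw_R1_lo n _ _ hg1 hc]
        have h2 : (ciwδ n (C a, C b)).2 = (⟨false, (C b).phase, (C b).mode, 0⟩ : StW) := by
          rw [hδ, ciw_R1_lo n _ _ hg1 hc]
        rw [stepFn_eq_update _ _ _ _ hab, h1, h2]
        have hca := hl a hg1.1
        refine Or.inl ⟨?_, ?_, ?_, ?_, ?_⟩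
        · intro x
          rcases eq_or_ne x a with rfl | hxa
          · rw [upd2_a hab]; dsimp only; exact hp x
          · rcases eq_or_ne x b with rfl | hxb
            · rw [upd2_b]; dsimp only; exact hp x
            · rw [upd2_o hxa hxb]; exact hp x
        · intro x
          rcases eq_or_ne x a with rfl | hxa
          · rw [upd2_a hab]; dsimp only; exact hm x
          · rcases eq_or_ne x b with rfl | hxb
            · rw [upd2_b]; dsimp only; exact hm x
            · rw [upd2_o hxa hxb]; exact hm x
        · intro x hx
          rcases eq_or_ne x a with rfl | hxa
          · rw [upd2_a hab] at hx; exact absurd hx (by dsimp only; simp)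
          · rcases eq_or_ne x b with rfl | hxb
            · rw [upd2_b]
            · rw [upd2_o hxa hxb] at hx ⊢; exact hf x hx
        · intro x hx
          rcases eq_or_ne x a with rfl | hxa
          · rw [upd2_a hab]; dsimp only; omega
          · rcases eq_or_ne x b with rfl | hxb
            · rw [upd2_b] at hx; exact absurd hx (by dsimp only; simp)
            · rw [upd2_o hxa hxb] at hx ⊢; exact hl x hx
        · have hsu := sum_upd2 hab C
            (⟨true, (C a).phase, (C a).mode, min n ((C a).cnt + (C b).cnt)⟩ : StW)
            (⟨false, (C b).phase, (C b).mode, 0⟩ : StW) (fun _ q => q.cnt)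
          simp only [] at hsu
          omega
    · -- no rule fires in stage A without two leaders
      have hnf : ciwδ n (C a, C b) = (C a, C b) := by
        rw [hδ]
        apply ciw_nofire
        · exact hg1
        · rintro ⟨-, h2, -⟩; rw [hp a] at h2; omega
        · rintro ⟨-, h2, -⟩; rw [hp a] at h2; omega
        · rintro ⟨h2, -⟩; rw [hp a] at h2; omega
        · rw [hp a]; omega
      rw [stepFn_eq_self _ _ _ _ hnf]
      exact Or.inl ⟨hp, hm, hf, hl, hs⟩
  -- ===================== Stage B =====================
  ·
    have huniq : ∀ x, (C x).leader = true → x = v := by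
      intro x hx
      by_contra hxv
      rw [hlead x hxv] at hx
      exact absurd hx (by simp)
    have hg1 : ¬((C a).leader = true ∧ (C b).leader = true) := by
      rintro ⟨ha1, hb1⟩
      exact hab ((huniq a ha1).trans (huniq b hb1).symm)
    have hg5 : ¬((C a).phase = 4) := by have := hph a; omega
    by_cases hg2 : (C a).leader = true ∧ (C a).phase = 2 ∧ (C a).mode = (C b).mode
    · -- ---------- rule R2 ----------
      obtain rfl : a = v := huniq a hg2.1
      have hcnteq := hbd3 hg2.2.1
      have hbd_b : bd ((C a).mode) a b (C b) = 0 := bd_of_eq _ _ hg2.2.2.symm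
      have hbd_a : bd ((C a).mode) a a (C a) = 0 := bd_self _ _ _
      have hble : (∑ x, bd ((C a).mode) a x (C x)) + 2 ≤ n := by
        have hle2 := sum_le_card_sub_two (f := fun x => bd ((C a).mode) a x (C x))
          (fun x => bd_le _ _ _ _) (Ne.symm hab) hbd_b hbd_a
        omega
      have hmin : min n ((C a).cnt + 1) = (C a).cnt + 1 := by omega
      by_cases hcc : min n ((C a).cnt + 1) = n - 1
      · -- R2, completion: leader a moves to phase 3
        have hau : a ≠ u := by
          rintro rfl
          have hmw : (C w).mode = (C a).mode := hu2 hg2.2.1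
          have hbw : b ≠ w := fun h => hmiss ⟨rfl, h⟩
          have hg_w : gd ((C a).mode) a w (C w) = 1 := gd_of_eq (Ne.symm huw) hmw
          have hg_b : gd ((C a).mode) a b (C b) = 1 := gd_of_eq (Ne.symm hab) hg2.2.2.symm
          have hsplitg := sum_split2 (fun x => gd ((C a).mode) a x (C x)) (Ne.symm hbw)
          have hbg := sum_bd_gd ((C a).mode) a C
          omega
        have h1 : (ciwδ n (C a, C b)).1 = (⟨true, 3, !(C a).mode, 1⟩ : StW) := by
          rw [hδ, ciw_R2_hi n _ _ hg1 hg2 hcc]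
        have h2 : (ciwδ n (C a, C b)).2
            = (⟨(C b).leader, (C b).phase, !(C b).mode, (C b).cnt⟩ : StW) := by
          rw [hδ, ciw_R2_hi n _ _ hg1 hg2 hcc]
        rw [stepFn_eq_update _ _ _ _ hab, h1, h2]
        have hcnt2 : (C a).cnt = n - 2 := by omega
        have hbg := sum_bd_gd ((C a).mode) a C
        have hgd1 : ∑ x, gd ((C a).mode) a x (C x) = 1 := by omega
        have hrest : ∑ x ∈ univ.erase b, gd ((C a).mode) a x (C x) = 0 := by
          have herase := Finset.sum_erase_add univ
            (fun x => gd ((C a).mode) a x (C x)) (Finset.mem_univ b)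
          have hg_b : gd ((C a).mode) a b (C b) = 1 := gd_of_eq (Ne.symm hab) hg2.2.2.symm
          omega
        have hmodes : ∀ x, x ≠ a → x ≠ b → (C x).mode = !(C a).mode := by
          intro x hxa hxb
          have h0 : gd ((C a).mode) a x (C x) = 0 :=
            Finset.sum_eq_zero_iff.mp hrest x (Finset.mem_erase.mpr ⟨hxb, Finset.mem_univ x⟩)
          apply bool_neq
          intro hmx
          rw [gd_of_eq hxa hmx] at h0
          omega
        have hmall : ∀ x, (Function.update (Function.update C a
            (⟨true, 3, !(C a).mode, 1⟩ : StW)) b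
            (⟨(C b).leader, (C b).phase, !(C b).mode, (C b).cnt⟩ : StW) x).mode
            = !(C a).mode := by
          intro x
          rcases eq_or_ne x a with rfl | hxa
          · rw [upd2_a hab]
          · rcases eq_or_ne x b with rfl | hxb
            · rw [upd2_b]; dsimp only; rw [← hg2.2.2]
            · rw [upd2_o hxa hxb]; exact hmodes x hxa hxb
        refine Or.inr ⟨a, ?_, ?_, ?_, ?_, ?_, ?_, ?_, ?_, ?_, ?_, ?_⟩
        · rw [upd2_a hab]
        · right; rw [upd2_a hab]
        · intro x hxa
          rcases eq_or_ne x b with rfl | hxb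
          · rw [upd2_b]; dsimp only; exact hlead x hxa
          · rw [upd2_o hxa hxb]; exact hlead x hxa
        · intro x
          rcases eq_or_ne x a with rfl | hxa
          · right; right; rw [upd2_a hab]
          · rcases eq_or_ne x b with rfl | hxb
            · rw [upd2_b]; dsimp only; exact hph x
            · rw [upd2_o hxa hxb]; exact hph x
        · intro x hx
          rcases eq_or_ne x a with rfl | hxa
          · rfl
          · rcases eq_or_ne x b with rfl | hxb
            · rw [upd2_b] at hx; dsimp only at hx; exact hp2 x hx
            · rw [upd2_o hxa hxb] at hx; exact hp2 x hx
        · intro x hx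
          rcases eq_or_ne x a with rfl | hxa
          · rw [upd2_a hab] at hx; dsimp only at hx; omega
          · rcases eq_or_ne x b with rfl | hxb
            · rw [upd2_b] at hx ⊢; dsimp only at hx ⊢; exact hp1c x hx
            · rw [upd2_o hxa hxb] at hx ⊢; exact hp1c x hx
        · have hsc := sum_upd2 hab C (⟨true, 3, !(C a).mode, 1⟩ : StW)
            (⟨(C b).leader, (C b).phase, !(C b).mode, (C b).cnt⟩ : StW) (fun _ q => p3c q)
          have hsn := sum_upd2 hab C (⟨true, 3, !(C a).mode, 1⟩ : StW)
            (⟨(C b).leader, (C b).phase, !(C b).mode, (C b).cnt⟩ : StW) (fun _ q => p3n q)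
          have e1 : p3c (C a) = 0 := p3c_zero (by omega)
          have e2 : p3n (C a) = 0 := p3n_zero (by omega)
          have e3 : p3c (⟨true, 3, !(C a).mode, 1⟩ : StW) = 1 := by simp [p3c]
          have e4 : p3n (⟨true, 3, !(C a).mode, 1⟩ : StW) = 1 := by simp [p3n]
          have e5 : p3c (⟨(C b).leader, (C b).phase, !(C b).mode, (C b).cnt⟩ : StW)
              = p3c (C b) := rfl
          have e6 : p3n (⟨(C b).leader, (C b).phase, !(C b).mode, (C b).cnt⟩ : StW)
              = p3n (C b) := rfl
          omega
        · intro hx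
          rw [upd2_a hab] at hx; dsimp only at hx; omega
        · intro _ x
          rw [hmall x, hmall a]
        · rcases eq_or_ne u b with rfl | hub
          · rw [upd2_b]; dsimp only; exact hu3
          · rw [upd2_o (Ne.symm hau) hub]; exact hu3
        · intro _
          rw [hmall w, hmall u]
      · -- R2, no completion: leader a counts one more agent
        have h1 : (ciwδ n (C a, C b)).1
            = (⟨true, (C a).phase, (C a).mode, min n ((C a).cnt + 1)⟩ : StW) := by
          rw [hδ, ciw_R2_lo n _ _ hg1 hg2 hcc]
        have h2 : (ciwδ n (C a, C b)).2
            = (⟨(C b).leader, (C b).phase, !(C b).mode, (C b).cnt⟩ : StW) := by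
          rw [hδ, ciw_R2_lo n _ _ hg1 hg2 hcc]
        rw [stepFn_eq_update _ _ _ _ hab, h1, h2]
        refine Or.inr ⟨a, ?_, ?_, ?_, ?_, ?_, ?_, ?_, ?_, ?_, ?_, ?_⟩
        · rw [upd2_a hab]
        · left; rw [upd2_a hab]; dsimp only; exact hg2.2.1
        · intro x hxa
          rcases eq_or_ne x b with rfl | hxb
          · rw [upd2_b]; dsimp only; exact hlead x hxa
          · rw [upd2_o hxa hxb]; exact hlead x hxa
        · intro x
          rcases eq_or_ne x a with rfl | hxa
          · right; left; rw [upd2_a hab]; dsimp only; exact hg2.2.1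
          · rcases eq_or_ne x b with rfl | hxb
            · rw [upd2_b]; dsimp only; exact hph x
            · rw [upd2_o hxa hxb]; exact hph x
        · intro x hx
          rcases eq_or_ne x a with rfl | hxa
          · rfl
          · rcases eq_or_ne x b with rfl | hxb
            · rw [upd2_b] at hx; dsimp only at hx; exact hp2 x hx
            · rw [upd2_o hxa hxb] at hx; exact hp2 x hx
        · intro x hx
          rcases eq_or_ne x a with rfl | hxa
          · rw [upd2_a hab] at hx; dsimp only at hx
            have := hg2.2.1
            omega
          · rcases eq_or_ne x b with rfl | hxb
            · rw [upd2_b] at hx ⊢; dsimp only at hx ⊢; exact hp1c x hx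
            · rw [upd2_o hxa hxb] at hx ⊢; exact hp1c x hx
        · have hsc := sum_upd2 hab C
            (⟨true, (C a).phase, (C a).mode, min n ((C a).cnt + 1)⟩ : StW)
            (⟨(C b).leader, (C b).phase, !(C b).mode, (C b).cnt⟩ : StW) (fun _ q => p3c q)
          have hsn := sum_upd2 hab C
            (⟨true, (C a).phase, (C a).mode, min n ((C a).cnt + 1)⟩ : StW)
            (⟨(C b).leader, (C b).phase, !(C b).mode, (C b).cnt⟩ : StW) (fun _ q => p3n q)
          have e1 : p3c (C a) = 0 := p3c_zero (by have := hg2.2.1; omega)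
          have e2 : p3n (C a) = 0 := p3n_zero (by have := hg2.2.1; omega)
          have e3 : p3c (⟨true, (C a).phase, (C a).mode, min n ((C a).cnt + 1)⟩ : StW) = 0 := by
            have := hg2.2.1
            unfold p3c
            dsimp only
            rw [if_neg (by omega)]
          have e4 : p3n (⟨true, (C a).phase, (C a).mode, min n ((C a).cnt + 1)⟩ : StW) = 0 := by
            have := hg2.2.1
            unfold p3n
            dsimp only
            rw [if_neg (by omega)]
          have e5 : p3c (⟨(C b).leader, (C b).phase, !(C b).mode, (C b).cnt⟩ : StW)
              = p3c (C b) := rfl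
          have e6 : p3n (⟨(C b).leader, (C b).phase, !(C b).mode, (C b).cnt⟩ : StW)
              = p3n (C b) := rfl
          omega
        · intro _
          rw [upd2_a hab]
          dsimp only
          have hbsu := sum_upd2 hab C
            (⟨true, (C a).phase, (C a).mode, min n ((C a).cnt + 1)⟩ : StW)
            (⟨(C b).leader, (C b).phase, !(C b).mode, (C b).cnt⟩ : StW)
            (fun x q => bd ((C a).mode) a x q)
          have e1 : bd ((C a).mode) a a
              (⟨true, (C a).phase, (C a).mode, min n ((C a).cnt + 1)⟩ : StW) = 0 :=
            bd_self _ _ _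
          have e2 : bd ((C a).mode) a b
              (⟨(C b).leader, (C b).phase, !(C b).mode, (C b).cnt⟩ : StW) = 1 := by
            unfold bd
            have hc2 : b ≠ a ∧
                (⟨(C b).leader, (C b).phase, !(C b).mode, (C b).cnt⟩ : StW).mode
                  ≠ (C a).mode :=
              ⟨Ne.symm hab, by dsimp only; rw [hg2.2.2]; exact bool_notne _⟩
            rw [if_pos hc2]
          omega
        · intro hx
          rw [upd2_a hab] at hx; dsimp only at hx
          rw [hg2.2.1] at hx
          exact absurd hx (by decide)
        · rcases eq_or_ne u a with rfl | hua
          · rw [upd2_a hab]; dsimp only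
            have := hg2.2.1
            omega
          · rcases eq_or_ne u b with rfl | hub
            · rw [upd2_b]; dsimp only; exact hu3
            · rw [upd2_o hua hub]; exact hu3
        · intro hx
          rcases eq_or_ne u a with rfl | hua
          · have hbw : b ≠ w := fun h => hmiss ⟨rfl, h⟩
            rw [upd2_a hab]
            rw [upd2_o (Ne.symm huw) (Ne.symm hbw)]
            dsimp only
            exact hu2 hg2.2.1
          · rcases eq_or_ne u b with rfl | hub
            · rw [upd2_b] at hx; dsimp only at hx
              exact absurd (hp2 u hx) (Ne.symm hab)
            · rw [upd2_o hua hub] at hx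
              exact absurd (hp2 u hx) hua
    
    by_cases hg3 : (C a).leader = true ∧ (C a).phase = 3 ∧ (C b).phase = 1
    · -- ---------- rule R3 ----------
      obtain rfl : a = v := huniq a hg3.1
      have hall : ∀ x, (C x).mode = (C a).mode := hmode3 hg3.2.1
      have hau : u ≠ a := fun h => hu3 (by rw [h]; exact hg3.2.1)
      have hcb0 : (C b).cnt = 0 := hp1c b hg3.2.2
      have h1 : (ciwδ n (C a, C b)).1
          = (⟨false, (C a).phase, (C a).mode, (C a).cnt⟩ : StW) := by
        rw [hδ, ciw_R3 n _ _ hg1 hg2 hg3]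
      have h2 : (ciwδ n (C a, C b)).2 = (⟨true, 2, (C b).mode, (C b).cnt⟩ : StW) := by
        rw [hδ, ciw_R3 n _ _ hg1 hg2 hg3]
      rw [stepFn_eq_update _ _ _ _ hab, h1, h2]
      have hmall : ∀ x, (Function.update (Function.update C a
          (⟨false, (C a).phase, (C a).mode, (C a).cnt⟩ : StW)) b
          (⟨true, 2, (C b).mode, (C b).cnt⟩ : StW) x).mode = (C a).mode := by
        intro x
        rcases eq_or_ne x a with rfl | hxa
        · rw [upd2_a hab]
        · rcases eq_or_ne x b with rfl | hxb
          · rw [upd2_b]; dsimp only; exact hall x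
          · rw [upd2_o hxa hxb]; exact hall x
      refine Or.inr ⟨b, ?_, ?_, ?_, ?_, ?_, ?_, ?_, ?_, ?_, ?_, ?_⟩
      · rw [upd2_b]
      · left; rw [upd2_b]
      · intro x hxb
        rcases eq_or_ne x a with rfl | hxa
        · rw [upd2_a hab]
        · rw [upd2_o hxa hxb]; exact hlead x hxa
      · intro x
        rcases eq_or_ne x a with rfl | hxa
        · right; right; rw [upd2_a hab]; dsimp only; exact hg3.2.1
        · rcases eq_or_ne x b with rfl | hxb
          · right; left; rw [upd2_b]
          · rw [upd2_o hxa hxb]; exact hph x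
      · intro x hx
        rcases eq_or_ne x b with rfl | hxb
        · rfl
        · rcases eq_or_ne x a with rfl | hxa
          · rw [upd2_a hab] at hx; dsimp only at hx
            have := hg3.2.1
            omega
          · rw [upd2_o hxa hxb] at hx
            exact absurd (hp2 x hx) hxa
      · intro x hx
        rcases eq_or_ne x a with rfl | hxa
        · rw [upd2_a hab] at hx; dsimp only at hx
          have := hg3.2.1
          omega
        · rcases eq_or_ne x b with rfl | hxb
          · rw [upd2_b] at hx; dsimp only at hx; omega
          · rw [upd2_o hxa hxb] at hx ⊢; exact hp1c x hx
      · have hsc := sum_upd2 hab C (⟨false, (C a).phase, (C a).mode, (C a).cnt⟩ : StW)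
          (⟨true, 2, (C b).mode, (C b).cnt⟩ : StW) (fun _ q => p3c q)
        have hsn := sum_upd2 hab C (⟨false, (C a).phase, (C a).mode, (C a).cnt⟩ : StW)
          (⟨true, 2, (C b).mode, (C b).cnt⟩ : StW) (fun _ q => p3n q)
        have e1 : p3c (⟨false, (C a).phase, (C a).mode, (C a).cnt⟩ : StW) = p3c (C a) := rfl
        have e2 : p3n (⟨false, (C a).phase, (C a).mode, (C a).cnt⟩ : StW) = p3n (C a) := rfl
        have e3 : p3c (⟨true, 2, (C b).mode, (C b).cnt⟩ : StW) = 0 := by simp [p3c]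
        have e4 : p3n (⟨true, 2, (C b).mode, (C b).cnt⟩ : StW) = 0 := by simp [p3n]
        have e5 : p3c (C b) = 0 := p3c_zero (by rw [hg3.2.2]; omega)
        have e6 : p3n (C b) = 0 := p3n_zero (by rw [hg3.2.2]; omega)
        omega
      · intro _
        rw [upd2_b]
        dsimp only
        have hz : (∑ x, bd ((C b).mode) b x (Function.update (Function.update C a
            (⟨false, (C a).phase, (C a).mode, (C a).cnt⟩ : StW)) b
            (⟨true, 2, (C b).mode, (C b).cnt⟩ : StW) x)) = 0 := by
          apply Finset.sum_eq_zero
          intro x _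
          apply bd_of_eq
          rw [hmall x, hall b]
        rw [hz]
        exact hcb0
      · intro hx
        rw [upd2_b] at hx; dsimp only at hx
        exact absurd hx (by decide)
      · rcases eq_or_ne u b with rfl | hub
        · rw [upd2_b]; dsimp only; omega
        · rw [upd2_o hau hub]; exact hu3
      · intro _
        rw [hmall w, hmall u]
    · by_cases hg4 : (C a).phase = 3 ∧ (C b).phase = 3 ∧ 0 < (C a).cnt ∧ 0 < (C b).cnt
      · -- ---------- rule R4 ----------
        have hua : u ≠ a := fun h => hu3 (by rw [h]; exact hg4.1)
        have hub : u ≠ b := fun h => hu3 (by rw [h]; exact hg4.2.1)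
        have hb1 : (∑ x, p3n (C x)) + 1 ≤ n := by
          have hle1 := sum_le_card_sub_one (f := fun x => p3n (C x))
            (fun x => p3n_le _) (p := u) (p3n_zero hu3)
          omega
        have hsplit3 := sum_split2 (fun x => p3c (C x)) hab
        have hpa : p3c (C a) = (C a).cnt := p3c_three hg4.1
        have hpb : p3c (C b) = (C b).cnt := p3c_three hg4.2.1
        have hcle : (C a).cnt + (C b).cnt + 1 ≤ n := by omega
        have hcc : ¬ min n ((C a).cnt + (C b).cnt) = n := by omega
        have h1 : (ciwδ n (C a, C b)).1
            = (⟨(C a).leader, (C a).phase, (C a).mode, min n ((C a).cnt + (C b).cnt)⟩ : StW) := by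
          rw [hδ, ciw_R4_lo n _ _ hg1 hg2 hg3 hg4 hcc]
        have h2 : (ciwδ n (C a, C b)).2
            = (⟨(C b).leader, (C b).phase, (C b).mode, 0⟩ : StW) := by
          rw [hδ, ciw_R4_lo n _ _ hg1 hg2 hg3 hg4 hcc]
        rw [stepFn_eq_update _ _ _ _ hab, h1, h2]
        have hld : ∀ x, (Function.update (Function.update C a
            (⟨(C a).leader, (C a).phase, (C a).mode, min n ((C a).cnt + (C b).cnt)⟩ : StW)) b
            (⟨(C b).leader, (C b).phase, (C b).mode, 0⟩ : StW) x).leader = (C x).leader := by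
          intro x
          rcases eq_or_ne x a with rfl | hxa
          · rw [upd2_a hab]
          · rcases eq_or_ne x b with rfl | hxb
            · rw [upd2_b]
            · rw [upd2_o hxa hxb]
        have hphx : ∀ x, (Function.update (Function.update C a
            (⟨(C a).leader, (C a).phase, (C a).mode, min n ((C a).cnt + (C b).cnt)⟩ : StW)) b
            (⟨(C b).leader, (C b).phase, (C b).mode, 0⟩ : StW) x).phase = (C x).phase := by
          intro x
          rcases eq_or_ne x a with rfl | hxa
          · rw [upd2_a hab]
          · rcases eq_or_ne x b with rfl | hxb
            · rw [upd2_b]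
            · rw [upd2_o hxa hxb]
        have hmd : ∀ x, (Function.update (Function.update C a
            (⟨(C a).leader, (C a).phase, (C a).mode, min n ((C a).cnt + (C b).cnt)⟩ : StW)) b
            (⟨(C b).leader, (C b).phase, (C b).mode, 0⟩ : StW) x).mode = (C x).mode := by
          intro x
          rcases eq_or_ne x a with rfl | hxa
          · rw [upd2_a hab]
          · rcases eq_or_ne x b with rfl | hxb
            · rw [upd2_b]
            · rw [upd2_o hxa hxb]
        refine Or.inr ⟨v, ?_, ?_, ?_, ?_, ?_, ?_, ?_, ?_, ?_, ?_, ?_⟩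
        · rw [hld v]; exact hvl
        · rw [hphx v]; exact hvp
        · intro x hxv; rw [hld x]; exact hlead x hxv
        · intro x; rw [hphx x]; exact hph x
        · intro x hx; rw [hphx x] at hx; exact hp2 x hx
        · intro x hx
          rw [hphx x] at hx
          rcases eq_or_ne x a with rfl | hxa
          · have := hg4.1; omega
          · rcases eq_or_ne x b with rfl | hxb
            · have := hg4.2.1; omega
            · rw [upd2_o hxa hxb]; exact hp1c x hx
        · have hsc := sum_upd2 hab C
            (⟨(C a).leader, (C a).phase, (C a).mode, min n ((C a).cnt + (C b).cnt)⟩ : StW)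
            (⟨(C b).leader, (C b).phase, (C b).mode, 0⟩ : StW) (fun _ q => p3c q)
          have hsn := sum_upd2 hab C
            (⟨(C a).leader, (C a).phase, (C a).mode, min n ((C a).cnt + (C b).cnt)⟩ : StW)
            (⟨(C b).leader, (C b).phase, (C b).mode, 0⟩ : StW) (fun _ q => p3n q)
          have e1 : p3c (⟨(C a).leader, (C a).phase, (C a).mode,
              min n ((C a).cnt + (C b).cnt)⟩ : StW) = min n ((C a).cnt + (C b).cnt) := by
            unfold p3c
            dsimp only
            rw [if_pos hg4.1]
          have e2 : p3n (⟨(C a).leader, (C a).phase, (C a).mode,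
              min n ((C a).cnt + (C b).cnt)⟩ : StW) = p3n (C a) := rfl
          have e3 : p3c (⟨(C b).leader, (C b).phase, (C b).mode, 0⟩ : StW) = 0 := by
            unfold p3c
            dsimp only
            split <;> rfl
          have e4 : p3n (⟨(C b).leader, (C b).phase, (C b).mode, 0⟩ : StW) = p3n (C b) := rfl
          omega
        · intro hx
          rw [hphx v] at hx
          have hva : v ≠ a := by
            intro h; rw [h] at hx; have := hg4.1; omega
          have hvb : v ≠ b := by
            intro h; rw [h] at hx; have := hg4.2.1; omega
          rw [upd2_o hva hvb]
          have hvc := hbd3 hx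
          have hbsu := sum_upd2 hab C
            (⟨(C a).leader, (C a).phase, (C a).mode, min n ((C a).cnt + (C b).cnt)⟩ : StW)
            (⟨(C b).leader, (C b).phase, (C b).mode, 0⟩ : StW)
            (fun x q => bd ((C v).mode) v x q)
          have e1 : bd ((C v).mode) v a (⟨(C a).leader, (C a).phase, (C a).mode,
              min n ((C a).cnt + (C b).cnt)⟩ : StW) = bd ((C v).mode) v a (C a) := rfl
          have e2 : bd ((C v).mode) v b (⟨(C b).leader, (C b).phase, (C b).mode, 0⟩ : StW)
              = bd ((C v).mode) v b (C b) := rfl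
          omega
        · intro hx x
          rw [hphx v] at hx
          rw [hmd x, hmd v]
          exact hmode3 hx x
        · rw [hphx u]; exact hu3
        · intro hx
          rw [hphx u] at hx
          rw [hmd w, hmd u]
          exact hu2 hx
      · -- ---------- no rule fires ----------
        have hnf : ciwδ n (C a, C b) = (C a, C b) := by
          rw [hδ]
          exact ciw_nofire n _ _ hg1 hg2 hg3 hg4 hg5
        rw [stepFn_eq_self _ _ _ _ hnf]
        exact Or.inr ⟨v, hvl, hvp, hlead, hph, hp2, hp1c, hsum3, hbd3, hmode3, hu3, hu2⟩


end Auxiliary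

theorem statement9 (n : ℕ) (hn : 2 ≤ n) (V : Type) [Fintype V]
    (hV : Fintype.card V = n) (E : V × V → Prop) (hG : IsCommGraph E)
    (hnc : ¬ IsComplete E) :
    (∀ C : V → StW, Reach (ciwδ n) E (fun _ => initW) C → ∀ a : V, (C a).phase ≠ 4) ∧
    IsStable outW (ciwδ n) E (fun _ : V => initW) ∧
    (∀ γ : ℕ → V × V, ValidSched E γ →
      ∀ (t : ℕ) (a : V), outW (conf (ciwδ n) initW γ t a) = false) := by
  classical
  obtain ⟨u, w, huw, hEuw⟩ : ∃ u w : V, u ≠ w ∧ ¬ E (u, w) := by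
    by_contra hc
    push_neg at hc
    exact hnc fun u w h => hc u w h
  have hinv0 : InvA n (fun _ : V => initW) := by
    refine ⟨fun _ => rfl, fun _ => rfl, ?_, fun _ _ => le_refl 1, ?_⟩
    · intro x hx
      exact absurd hx (by simp [initW])
    · simp [initW, Finset.card_univ, hV]
  have key : ∀ C : V → StW, Reach (ciwδ n) E (fun _ => initW) C → InvA n C ∨ InvB u w C := by
    intro C h
    induction h with
    | refl => exact Or.inl hinv0
    | tail hsteps hstep ih =>
      obtain ⟨e, hEe, rfl⟩ := hstep
      have hab : e.1 ≠ e.2 := by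
        intro h
        exact hG.1 e.1 (by rwa [show e = (e.1, e.1) from Prod.ext rfl h.symm] at hEe)
      have hmiss : ¬(e.1 = u ∧ e.2 = w) := by
        rintro ⟨h1, h2⟩
        exact hEuw (by rwa [show e = (u, w) from Prod.ext h1 h2] at hEe)
      have hstep' := inv_step_s9 n hn hV u w huw _ e.1 e.2 hab hmiss ih
      rwa [show ((e.1, e.2) : V × V) = e from rfl] at hstep'
  have no4 : ∀ C : V → StW, Reach (ciwδ n) E (fun _ => initW) C → ∀ x : V, (C x).phase ≠ 4 := by
    intro C h x
    rcases key C h with hA | ⟨v, -, -, -, hph, -, -, -, -, -, -, -⟩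
    · rw [hA.1 x]; omega
    · have := hph x; omega
  refine ⟨fun C h a => no4 C h a, ?_, ?_⟩
  · intro C' h x
    have h4 := no4 C' h x
    simp only [outW, initW]
    rw [beq_eq_false_iff_ne.mpr h4]
    rfl
  · intro γ hγ t x
    have hr : Reach (ciwδ n) E (fun _ => initW) (conf (ciwδ n) initW γ t) := by
      induction t with
      | zero => exact Relation.ReflTransGen.refl
      | succ t ih => exact Relation.ReflTransGen.tail ih ⟨γ t, hγ t, rfl⟩
    have h4 := no4 _ hr x
    simp only [outW]
    exact beq_eq_false_iff_ne.mpr h4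

end

end CGI
end
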